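/- arXiv:0707.1835 — 9 statements merged into one kernel-verified Lean document; each statement's English description precedes it below -/
import Mathlib

section
/- Let p be a prime, e a positive integer, and set q = p^e. Suppose q ≡ 3 (mod 4), q ≥ 4, let n be a divisor of (q+1)/4 and let r = (q-1)/2. Then for all nonnegative integers n' and i, if n' ≡ n·p^i (mod r) then n' ≥ n. -/
theorem stmt0 (p e q n r : ℕ) (hp : p.Prime) (he : 1 ≤ e) (hq : q = p ^ e)
    (hq3 : q % 4 = 3) (hq4 : 4 ≤ q) (hn : n ∣ (q + 1) / 4) (hr : r = (q - 1) / 2) :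
    ∀ n' i : ℕ, n' ≡ n * p ^ i [MOD r] → n ≤ n' := by
  intro n' i h
  by_contra hlt
  push_neg at hlt
  -- p is odd
  have hpodd : p % 2 = 1 := by
    rcases hp.eq_two_or_odd with h2 | h1
    · exfalso
      subst h2
      have h0 : (2 : ℕ) ^ e % 2 = 0 := by
        have : (2 : ℕ) ∣ 2 ^ e := dvd_pow_self 2 (by omega)
        omega
      omega
    · exact h1
  have hp3 : 3 ≤ p := by have := hp.two_le; omega
  have hq7 : 7 ≤ q := by omega
  have h2r : 2 * r = q - 1 := by omega
  have hrq : q = 2 * r + 1 := by omega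
  obtain ⟨a, ha⟩ : 4 ∣ q + 1 := by omega
  have han : n ∣ a := by
    have : (q + 1) / 4 = a := by omega
    rwa [this] at hn
  have ha2 : 2 ≤ a := by omega
  have hn1 : 1 ≤ n := Nat.pos_of_dvd_of_pos han (by omega)
  have hna : n ≤ a := Nat.le_of_dvd (by omega) han
  have hnr : n < r := by omega
  have h2n : 2 * n ∣ r + 1 := by
    obtain ⟨m, hm⟩ := han
    exact ⟨m, by rw [Nat.mul_assoc]; omega⟩
  -- reduce i mod e
  set j := i % e with hj
  have hje : j < e := Nat.mod_lt _ (by omega)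
  have hpe : p ^ e ≡ 1 [MOD r] := by
    have : p ^ e = 1 + r * 2 := by omega
    unfold Nat.ModEq
    rw [this, Nat.add_mul_mod_self_left]
  have hpij : p ^ i ≡ p ^ j [MOD r] := by
    calc p ^ i = (p ^ e) ^ (i / e) * p ^ j := by
          rw [← pow_mul, ← pow_add, hj, Nat.div_add_mod]
      _ ≡ 1 ^ (i / e) * p ^ j [MOD r] := ((hpe.pow _).mul_right _)
      _ = p ^ j := by ring
  have h' : n' ≡ n * p ^ j [MOD r] := h.trans ((Nat.ModEq.refl n).mul hpij)
  -- move to integers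
  obtain ⟨k, hk⟩ : (r : ℤ) ∣ (n * p ^ j : ℤ) - n' := by
    have := h'.dvd
    exact_mod_cast this
  have hpj1 : 1 ≤ p ^ j := Nat.one_le_pow _ _ (by omega)
  have hnpj : n ≤ n * p ^ j := Nat.le_mul_of_pos_right _ (by omega)
  have hk0 : 0 ≤ k := by
    have h1 : 0 < (n * p ^ j : ℤ) - n' := by
      have : (n' : ℤ) < n * p ^ j := by exact_mod_cast lt_of_lt_of_le hlt hnpj
      linarith
    have hr0 : (0:ℤ) < r := by exact_mod_cast (show 0 < r by omega)
    nlinarith [hk, hr0, h1]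
  -- p^j is odd
  have hpjodd : p ^ j % 2 = 1 := by
    rw [Nat.pow_mod, hpodd, Nat.one_pow]
  -- 2n divides k + n - n'
  have hd1 : (2 * n : ℤ) ∣ (r : ℤ) + 1 := by exact_mod_cast h2n
  have hd2 : (2 * n : ℤ) ∣ (n : ℤ) * ((p : ℤ) ^ j - 1) := by
    obtain ⟨t, ht⟩ : (2 : ℕ) ∣ p ^ j - 1 := by omega
    refine ⟨t, ?_⟩
    have : ((p : ℤ)) ^ j - 1 = 2 * t := by
      have hcast : ((p ^ j : ℕ) : ℤ) = (p : ℤ) ^ j := by push_cast; ring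
      have : (p ^ j : ℕ) = 2 * t + 1 := by omega
      rw [← hcast, this]; push_cast; ring
    rw [this]; ring
  have hd : (2 * n : ℤ) ∣ k + n - n' := by
    have heq : k + (n : ℤ) - n' = k * ((r : ℤ) + 1) - (n : ℤ) * ((p : ℤ) ^ j - 1) := by
      have : (n * p ^ j : ℤ) - n' = r * k := hk
      push_cast at this ⊢
      linarith
    rw [heq]
    exact dvd_sub (Dvd.dvd.mul_left hd1 k) hd2
  -- hence k ≥ n + n'
  have hkge : (n : ℤ) + n' ≤ k := by
    obtain ⟨c, hc⟩ := hd
    have hpos : 0 < k + (n : ℤ) - n' := by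
      have : (n' : ℤ) < n := by exact_mod_cast hlt
      linarith
    have h2n0 : (0:ℤ) < 2 * (n:ℤ) := by positivity
    have hc1 : 1 ≤ c := by
      by_contra hcn
      push_neg at hcn
      have hle0 : (2 * (n:ℤ)) * c ≤ 0 :=
        mul_nonpos_of_nonneg_of_nonpos h2n0.le (by linarith)
      linarith
    have : 2 * (n:ℤ) ≤ 2 * (n:ℤ) * c := le_mul_of_one_le_right h2n0.le hc1
    linarith
  -- hence p^j ≥ r
  have hpjr : (r : ℤ) ≤ (p : ℤ) ^ j := by
    have hrk : (n : ℤ) * (p : ℤ) ^ j - n' = r * k := by linarith [hk]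
    have hn1' : (1 : ℤ) ≤ n := by exact_mod_cast hn1
    have hr0 : (0 : ℤ) < r := by exact_mod_cast (by omega : 0 < r)
    nlinarith
  have hpjr' : r ≤ p ^ j := by exact_mod_cast hpjr
  -- but p^j ≤ p^(e-1) < r
  have hle : p ^ j ≤ p ^ (e - 1) := Nat.pow_le_pow_right (by omega) (by omega)
  obtain ⟨e', rfl⟩ : ∃ e', e = e' + 1 := ⟨e - 1, by omega⟩
  have he'' : e' + 1 - 1 = e' := by omega
  rw [he''] at hle
  have hmul : p * p ^ e' = q := by rw [hq, pow_succ']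
  have h3 : 3 * p ^ e' ≤ q := by
    calc 3 * p ^ e' ≤ p * p ^ e' := Nat.mul_le_mul_right _ hp3
      _ = q := hmul
  have hP1 : 1 ≤ p ^ e' := Nat.one_le_pow _ _ (by omega)
  omega
end

section
/- Let p be a prime, e a positive integer, and set q = p^e with q ≥ 4 and q not ≡ 3 (mod 4). Let n be a divisor of q+1 with n < q+1, and let r = q-1. Then for all nonnegative integers n' and i, if n' ≡ n·p^i (mod r) then n' ≥ n. -/
set_option maxHeartbeats 1000000

lemma aux_key (p e q n : ℕ) (hp : p.Prime) (he : 1 ≤ e) (hq : q = p ^ e)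
    (hq4 : 4 ≤ q) (hn : n ∣ q + 1) (hnlt : n < q + 1) (j : ℕ) (hj : j < e) :
    n ≤ (n * p ^ j) % (q - 1) := by
  have hp2 : 2 ≤ p := hp.two_le
  have hn1 : 1 ≤ n := Nat.pos_of_dvd_of_pos hn (by omega)
  obtain ⟨s, hs⟩ := id hn
  by_contra hm
  push_neg at hm
  set m := (n * p ^ j) % (q - 1) with hmdef
  set k := (n * p ^ j) / (q - 1) with hkdef
  have heq : (q - 1) * k + m = n * p ^ j := Nat.div_add_mod (n * p ^ j) (q - 1)
  clear_value m k
  have hq1 : (1:ℕ) ≤ q := by omega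
  have hk1 : 1 ≤ k := by
    rcases Nat.eq_zero_or_pos k with h | h
    · rw [h] at heq
      simp at heq
      have : n ≤ n * p ^ j := Nat.le_mul_of_pos_right n (by positivity)
      omega
    · exact h
  have h1 : ((q : ℤ) - 1) * k + m = n * p ^ j := by
    have hh := heq
    zify [hq1] at hh
    linarith [hh]
  have h2 : (q : ℤ) + 1 = n * s := by exact_mod_cast hs
  -- integer identity: n * (k*s - p^j) = 2*k - m
  have hzeq : (n : ℤ) * ((k : ℤ) * s - (p : ℤ) ^ j) = 2 * k - m := by
    linear_combination (-(k:ℤ)) * h2 + h1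
  have hd0 : 0 ≤ (k : ℤ) * s - (p : ℤ) ^ j := by
    nlinarith [hzeq, (by exact_mod_cast hm : (m : ℤ) < n), (by exact_mod_cast hn1 : (1:ℤ) ≤ n),
      (by exact_mod_cast hk1 : (1:ℤ) ≤ k), (by positivity : (0:ℤ) ≤ (m:ℤ))]
  rcases hd0.eq_or_lt with hd | hd
  · -- d = 0 : s divides p^j, impossible
    have hks : (k : ℤ) * s = (p : ℤ) ^ j := by linarith
    have hksn : k * s = p ^ j := by exact_mod_cast hks
    have hsd : s ∣ p ^ j := ⟨k, by rw [← hksn]; ring⟩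
    obtain ⟨c, hc, hceq⟩ := (Nat.dvd_prime_pow hp).mp hsd
    rcases Nat.eq_zero_or_pos c with h0 | h0
    · rw [h0, pow_zero] at hceq
      rw [hceq, mul_one] at hs
      omega
    · have hps : p ∣ s := hceq ▸ dvd_pow_self p (by omega)
      have hpq1 : p ∣ q + 1 := by rw [hs]; exact hps.mul_left n
      have hpq : p ∣ q := hq ▸ dvd_pow_self p (by omega)
      have hone : p ∣ 1 := by simpa using Nat.dvd_sub hpq1 hpq
      have := Nat.le_of_dvd one_pos hone
      omega
  · -- d ≥ 1 : n ≤ 2k, then q - 1 ≤ 2 p^j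
    have hd1 : 1 ≤ (k : ℤ) * s - (p : ℤ) ^ j := hd
    have hn2k : (n : ℤ) ≤ 2 * k - m := by
      calc (n : ℤ) = n * 1 := by ring
        _ ≤ n * ((k : ℤ) * s - (p : ℤ) ^ j) :=
            mul_le_mul_of_nonneg_left hd1 (by positivity)
        _ = 2 * k - m := hzeq
    have hkle : (k : ℤ) * ((q:ℤ) - 1) ≤ n * p ^ j := by
      nlinarith [h1, (by positivity : (0:ℤ) ≤ (m:ℤ))]
    have hqZ' : (1:ℤ) ≤ (q:ℤ) := by exact_mod_cast hq1
    have hnZ1 : (1:ℤ) ≤ (n:ℤ) := by exact_mod_cast hn1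
    have hmZ0' : (0:ℤ) ≤ (m:ℤ) := Int.natCast_nonneg m
    have ha : (n:ℤ) ≤ 2 * k := by linarith
    have hb : (n:ℤ) * ((q:ℤ) - 1) ≤ (2*(k:ℤ)) * ((q:ℤ)-1) :=
      mul_le_mul_of_nonneg_right ha (by linarith)
    have hc : (n:ℤ) * ((q:ℤ)-1) ≤ (n:ℤ) * (2 * (p:ℤ)^j) := by
      calc (n:ℤ)*((q:ℤ)-1) ≤ (2*(k:ℤ))*((q:ℤ)-1) := hb
        _ = 2 * ((k:ℤ)*((q:ℤ)-1)) := by ring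
        _ ≤ 2 * ((n:ℤ)*(p:ℤ)^j) := by linarith [hkle]
        _ = (n:ℤ)*(2*(p:ℤ)^j) := by ring
    have hqp : (q:ℤ) - 1 ≤ 2 * (p:ℤ)^j := le_of_mul_le_mul_left hc (by linarith)
    have hqpn : q ≤ 2 * p ^ j + 1 := by exact_mod_cast (by linarith : (q:ℤ) ≤ 2*(p:ℤ)^j + 1)
    rcases eq_or_ne p 2 with hp2' | hpne
    · -- p = 2
      subst hp2'
      have hjq : 2 ^ (j + 1) ≤ q := by
        rw [hq]; exact Nat.pow_le_pow_right (by norm_num) (by omega)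
      have hqeven : q % 2 = 0 := by
        have : (2:ℕ) ∣ 2 ^ e := dvd_pow_self 2 (by omega)
        omega
      have hqj : 2 ^ (j + 1) = q := by
        have h2even : 2 ^ (j + 1) % 2 = 0 := by
          have : (2:ℕ) ∣ 2 ^ (j+1) := dvd_pow_self 2 (by omega)
          omega
        have h2j : 2 ^ (j + 1) = 2 * 2 ^ j := by ring
        omega
      have hq1mod : q ≡ 1 [MOD q - 1] := by
        show q % (q-1) = 1 % (q-1)
        conv_lhs => rw [show q = (q-1) + 1 by omega]
        exact Nat.add_mod_left _ _
      have hmod : 2 * m ≡ n [MOD q - 1] := by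
        calc 2*m = 2*((n*2^j) % (q-1)) := by rw [hmdef]
          _ ≡ 2*(n*2^j) [MOD q-1] := Nat.ModEq.mul_left 2 (Nat.mod_modEq _ _)
          _ = n*q := by rw [← hqj]; ring
          _ ≡ n*1 [MOD q-1] := Nat.ModEq.mul_left n hq1mod
          _ = n := by ring
      have hodd : n % 2 = 1 := by
        have h2n : ¬ (2 ∣ n) := by
          intro h2
          have : (2:ℕ) ∣ q + 1 := h2.trans hn
          omega
        omega
      have hs2 : 2 ≤ s := by
        by_contra h
        push_neg at h
        interval_cases s <;> omega
      have hnq : n ≤ q - 1 := by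
        have h2q : n * 2 ≤ q + 1 := hs ▸ mul_le_mul_right hs2 n
        omega
      obtain ⟨t, ht⟩ := hmod.dvd
      have hQ : ((q-1:ℕ):ℤ) = (q:ℤ) - 1 := by push_cast [hq1]; ring
      rw [hQ] at ht
      push_cast at ht
      -- ht : (n:ℤ) - 2*m = ((q:ℤ)-1) * t
      have hmZ : (m:ℤ) < n := by exact_mod_cast hm
      have hnZ : (n:ℤ) ≤ (q:ℤ) - 1 := by omega
      have hqZ : (4:ℤ) ≤ q := by exact_mod_cast hq4
      have hmZ0 : (0:ℤ) ≤ (m:ℤ) := Int.natCast_nonneg m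
      have hnZ1 : (1:ℤ) ≤ (n:ℤ) := by exact_mod_cast hn1
      have ht1 : t ≤ 1 := by
        by_contra h
        push_neg at h
        have h2 : ((q:ℤ)-1) * 2 ≤ ((q:ℤ)-1) * t :=
          mul_le_mul_of_nonneg_left (by linarith) (by linarith)
        linarith
      have ht0 : 0 ≤ t := by
        by_contra h
        push_neg at h
        have h2 : ((q:ℤ)-1) * t ≤ ((q:ℤ)-1) * (-1) :=
          mul_le_mul_of_nonneg_left (by linarith) (by linarith)
        linarith
      interval_cases t
      · -- n = 2m : contradicts n odd
        simp at ht
        have : n = 2 * m := by omega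
        omega
      · -- n - 2m = q - 1 : forces n = q-1, m = 0
        have hne : n = q - 1 := by omega
        have hm0 : m = 0 := by omega
        have hd2 : n ∣ 2 := by
          have hh := Nat.dvd_sub hn (show n ∣ q - 1 from hne ▸ dvd_refl n)
          simpa [show q + 1 - (q - 1) = 2 by omega] using hh
        have := Nat.le_of_dvd (by norm_num) hd2
        omega
    · -- p ≥ 3
      have hp3 : 3 ≤ p := by
        have := hp.two_le
        omega
      have hpj : p ^ j ≤ p ^ (e - 1) := Nat.pow_le_pow_right (by omega) (by omega)
      have h3pj : 3 * p ^ (e-1) ≤ q := by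
        calc 3 * p ^ (e-1) ≤ p * p ^ (e-1) := Nat.mul_le_mul_right _ hp3
          _ = p ^ e := by rw [← pow_succ']; congr 1; omega
          _ = q := hq.symm
      linarith [hqpn, hpj, h3pj, hq4]

theorem stmt1 (p e q n r : ℕ) (hp : p.Prime) (he : 1 ≤ e) (hq : q = p ^ e)
    (hq3 : q % 4 ≠ 3) (hq4 : 4 ≤ q) (hn : n ∣ q + 1) (hnlt : n < q + 1) (hr : r = q - 1) :
    ∀ n' i : ℕ, n' ≡ n * p ^ i [MOD r] → n ≤ n' := by
  intro n' i hcong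
  have hq1 : p ^ e ≡ 1 [MOD r] := by
    show p ^ e % r = 1 % r
    rw [← hq, hr]
    conv_lhs => rw [show q = (q-1) + 1 by omega]
    exact Nat.add_mod_left _ _
  set j := i % e with hjdef
  have hje : j < e := Nat.mod_lt i (by omega)
  have hpij : p ^ i ≡ p ^ j [MOD r] := by
    conv_lhs => rw [show i = e * (i / e) + j from (Nat.div_add_mod i e).symm]
    rw [pow_add, pow_mul]
    calc (p ^ e) ^ (i / e) * p ^ j ≡ 1 ^ (i/e) * p ^ j [MOD r] :=
          Nat.ModEq.mul_right _ (hq1.pow _)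
      _ = p ^ j := by ring
  have hcong2 : n' ≡ n * p ^ j [MOD r] := hcong.trans (Nat.ModEq.mul_left n hpij)
  have hkey : n ≤ (n * p ^ j) % (q - 1) :=
    aux_key p e q n hp he hq hq4 hn hnlt j hje
  have : n' % r = (n * p ^ j) % r := hcong2
  calc n ≤ (n * p ^ j) % (q - 1) := hkey
    _ = n' % r := by rw [this, hr]
    _ ≤ n' := Nat.mod_le n' r
end

section
/- Suppose q = p^e ≡ 3 (mod 4) with p prime, n = (q+1)/4, and r = (q-1)/2. Then for 0 ≤ i < e, the least nonnegative residue of n·p^i modulo r equals n + (p^i - 1)/2. -/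
theorem stmt2 (p e q n r : ℕ) (hp : p.Prime) (he : 1 ≤ e) (hq : q = p ^ e)
    (hq3 : q % 4 = 3) (hq4 : 3 < q) (hn : n = (q + 1) / 4) (hr : r = (q - 1) / 2) :
    ∀ i : ℕ, i < e → (n * p ^ i) % r = n + (p ^ i - 1) / 2 := by
  intro i hi
  have hq2 : q % 2 = 1 := by omega
  have hpodd : p % 2 = 1 := by
    rcases hp.eq_two_or_odd with h | h
    · exfalso
      have h2 : 2 ∣ q := by
        rw [hq, ← h]; exact dvd_pow_self p (by omega)
      omega
    · exact h
  have hp3 : 3 ≤ p := by have := hp.two_le; omega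
  have hpi : p ^ i % 2 = 1 := by
    rw [Nat.pow_mod, hpodd, one_pow]; rfl
  have hppos : 0 < p ^ i := pow_pos hp.pos i
  set k := (p ^ i - 1) / 2 with hkdef
  have hk : p ^ i = 2 * k + 1 := by omega
  have h4n : 4 * n = q + 1 := by omega
  have h2r : 2 * r = q - 1 := by omega
  have hbound : p ^ i < r := by
    have h1 : p ^ i ≤ p ^ (e - 1) := Nat.pow_le_pow_right hp.pos (by omega)
    have h2 : p ^ (e - 1) * p = q := by rw [hq, ← pow_succ]; congr 1; omega
    have h3 : p ^ (e - 1) * 3 ≤ q := by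
      rw [← h2]; exact Nat.mul_le_mul_left _ hp3
    have h4 : 1 ≤ p ^ (e - 1) := Nat.one_le_pow _ _ hp.pos
    omega
  have h2n : 2 * n = r + 1 := by omega
  have heq : n * p ^ i = r * k + (n + k) := by
    rw [hk]
    calc n * (2 * k + 1) = (2 * n) * k + n := by ring
      _ = (r + 1) * k + n := by rw [h2n]
      _ = r * k + (n + k) := by ring
  rw [heq, Nat.mul_add_mod]
  exact Nat.mod_eq_of_lt (by omega)
end

section
/- Let F be a field containing F_{p^e} and let z ∈ F. The following are equivalent: (a) the polynomial T^{p^e} - T - z is irreducible over F; (b) for all ζ ∈ F_{p^e}^*, the polynomial T^p - T - ζz is irreducible over F; (c) for all ζ ∈ F_{p^e}^*, the polynomial T^p - T - ζz has no root in F. -/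
/-!
Let `q = p ^ n = #k` and let `α` be a root of `f = X ^ q - X - z` in a splitting field `K`.
The roots of `f` are the translates `α + c`, `c ∈ k`, so every `σ ∈ Gal(K/F)` acts by
`σ α = α + c_σ` and the `c_σ` form an additive subgroup `W` of `k`; `f` is irreducible iff the
Galois group is transitive on its roots, i.e. iff `W = k`.
For `ζ ∈ k` the element `β = ∑_{i<n} (ζ α) ^ p ^ i` satisfies `β ^ p - β = ζ z` and
`σ β = β + Tr(ζ c_σ)`. The roots of `T ^ p - T - ζ z` are `β + 𝔽_p`, so one of them lies in `F`
iff `β` is Galois invariant, iff `ζ` is orthogonal to `W` for the trace form. As the trace form is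
nondegenerate, `W = k` iff no `ζ ≠ 0` gives a root in `F`. The case `k = 𝔽_p` yields the
equivalence of (b) and (c).
-/

open Polynomial

def frobeniusSum (p n : ℕ) {A : Type*} [CommSemiring A] (x : A) : A :=
  ∑ i ∈ Finset.range n, x ^ p ^ i

section frobeniusSum

variable {p : ℕ} (n : ℕ)

theorem map_frobeniusSum {A B : Type*} [CommSemiring A] [CommSemiring B] (f : A →+* B) (x : A) :
    f (frobeniusSum p n x) = frobeniusSum p n (f x) := by
  simp only [frobeniusSum, map_sum, map_pow]

variable [Fact p.Prime] {A : Type*} [CommRing A] [CharP A p]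

theorem frobeniusSum_add (x y : A) :
    frobeniusSum p n (x + y) = frobeniusSum p n x + frobeniusSum p n y := by
  simp only [frobeniusSum, add_pow_char_pow, Finset.sum_add_distrib]

theorem frobeniusSum_pow_char_sub_self (x : A) :
    frobeniusSum p n x ^ p - frobeniusSum p n x = x ^ p ^ n - x := by
  simp only [frobeniusSum, sum_pow_char, ← pow_mul, ← pow_succ, ← Finset.sum_sub_distrib]
  rw [Finset.sum_range_sub (fun i => x ^ p ^ i), pow_zero, pow_one]

end frobeniusSum

theorem Submodule.eq_top_iff_forall_trace_mul_eq_zero {K L : Type*} [Field K] [Field L]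
    [Algebra K L] [FiniteDimensional K L] [Algebra.IsSeparable K L] (W : Submodule K L) :
    W = ⊤ ↔ ∀ ζ : L, (∀ c ∈ W, Algebra.trace K L (ζ * c) = 0) → ζ = 0 := by
  have hB := traceForm_nondegenerate K L
  constructor
  · rintro rfl ζ hζ
    exact hB.1 ζ fun c => hζ c Submodule.mem_top
  · intro h
    have horth : (Algebra.traceForm K L).orthogonal W = ⊥ := by
      refine (Submodule.eq_bot_iff _).mpr fun ζ hζ => h ζ fun c hc => ?_
      rw [mul_comm]
      exact hζ c hc
    rw [← LinearMap.BilinForm.orthogonal_orthogonal hB (Algebra.traceForm_isSymm K).isRefl W,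
      horth, LinearMap.BilinForm.orthogonal_bot]

theorem FiniteField.mem_range_of_pow_natCard_eq_self {k K : Type*} [Field k] [Finite k] [Field K]
    (ψ : k →+* K) {x : K} (hx : x ^ Nat.card k = x) : x ∈ Set.range ψ := by
  have := Fintype.ofFinite k
  rw [Nat.card_eq_fintype_card] at hx
  have hne : (X ^ Fintype.card k - X : k[X]) ≠ 0 :=
    FiniteField.X_pow_card_sub_X_ne_zero k Fintype.one_lt_card
  have hroots := roots_map_of_injective_of_card_eq_natDegree ψ.injective
    (p := X ^ Fintype.card k - X) (by
      rw [FiniteField.roots_X_pow_card_sub_X, Finset.card_val, Finset.card_univ,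
        FiniteField.X_pow_card_sub_X_natDegree_eq k Fintype.one_lt_card])
  have hx' : x ∈ ((X ^ Fintype.card k - X : k[X]).map ψ).roots := by
    rw [mem_roots (Polynomial.map_ne_zero hne)]
    simp [hx]
  rw [← hroots, FiniteField.roots_X_pow_card_sub_X] at hx'
  obtain ⟨c, -, hc⟩ := Multiset.mem_map.mp hx'
  exact ⟨c, hc⟩

theorem natDegree_X_pow_sub_X_sub_C {R : Type*} [Ring R] [Nontrivial R] {m : ℕ} (hm : 1 < m)
    (a : R) : (X ^ m - X - C a : R[X]).natDegree = m := by
  rw [natDegree_sub_C, natDegree_sub_eq_left_of_natDegree_lt] <;> simp [hm]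

theorem monic_X_pow_sub_X_sub_C {R : Type*} [CommRing R] [Nontrivial R] {m : ℕ} (hm : 1 < m)
    (a : R) : (X ^ m - X - C a : R[X]).Monic := by
  rw [sub_sub]
  refine monic_X_pow_sub ((degree_add_le _ _).trans_lt ?_)
  rw [degree_X, max_lt_iff]
  exact ⟨by exact_mod_cast hm, degree_C_le.trans_lt (by exact_mod_cast zero_lt_one.trans hm)⟩

theorem separable_X_pow_sub_X_sub_C {R : Type*} [CommRing R] (p : ℕ) [CharP R p] {m : ℕ}
    (hm : p ∣ m) (a : R) : (X ^ m - X - C a : R[X]).Separable := by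
  have h : (X ^ m - X - C a : R[X]) = C 1 * X ^ m + C (-1) * X + C (-a) := by
    simp only [map_one, one_mul, map_neg]
    ring
  rw [h]
  exact separable_C_mul_X_pow_add_C_mul_X_add_C' p _ 1 (-1) (-a) hm isUnit_one.neg

theorem isRoot_X_pow_sub_X_sub_C_iff {R : Type*} [CommRing R] (m : ℕ) (a y : R) :
    (X ^ m - X - C a : R[X]).IsRoot y ↔ y ^ m - y = a := by
  simp [sub_eq_zero]

section translates

variable (p : ℕ) [Fact p.Prime] {k : Type*} [Field k] [Finite k] [Algebra (ZMod p) k]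

theorem FiniteField.natCard_eq_pow_finrank_zmod : Nat.card k = p ^ Module.finrank (ZMod p) k := by
  rw [Module.natCard_eq_pow_finrank (K := ZMod p), Nat.card_zmod]

theorem FiniteField.one_lt_pow_finrank_zmod : 1 < p ^ Module.finrank (ZMod p) k := by
  rw [← natCard_eq_pow_finrank_zmod p]
  exact Finite.one_lt_card

theorem FiniteField.pow_char_pow_finrank (x : k) : x ^ p ^ Module.finrank (ZMod p) k = x := by
  have := Fintype.ofFinite k
  rw [← natCard_eq_pow_finrank_zmod p, Nat.card_eq_fintype_card, FiniteField.pow_card]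

theorem FiniteField.algebraMap_trace_eq_frobeniusSum (x : k) :
    algebraMap (ZMod p) k (Algebra.trace (ZMod p) k x) =
      frobeniusSum p (Module.finrank (ZMod p) k) x := by
  rw [FiniteField.algebraMap_trace_eq_sum_pow, Nat.card_zmod, frobeniusSum]

variable {p} {K : Type*} [Field K] [CharP K p] (ψ : k →+* K)

theorem pow_sub_self_eq_iff_exists_add {α β : K} :
    β ^ p ^ Module.finrank (ZMod p) k - β = α ^ p ^ Module.finrank (ZMod p) k - α ↔
      ∃ c, β = α + ψ c := by
  constructor
  · intro h
    have hfix : (β - α) ^ Nat.card k = β - α := by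
      rw [FiniteField.natCard_eq_pow_finrank_zmod p, sub_pow_char_pow]
      linear_combination h
    obtain ⟨c, hc⟩ := FiniteField.mem_range_of_pow_natCard_eq_self ψ hfix
    exact ⟨c, by rw [hc]; ring⟩
  · rintro ⟨c, rfl⟩
    rw [add_pow_char_pow, ← map_pow, FiniteField.pow_char_pow_finrank p]
    ring

theorem frobeniusSum_mul_pow_char_sub_self (ζ : k) (α : K) :
    frobeniusSum p (Module.finrank (ZMod p) k) (ψ ζ * α) ^ p -
        frobeniusSum p (Module.finrank (ZMod p) k) (ψ ζ * α) =
      ψ ζ * (α ^ p ^ Module.finrank (ZMod p) k - α) := by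
  rw [frobeniusSum_pow_char_sub_self, mul_pow, ← map_pow, FiniteField.pow_char_pow_finrank p,
    mul_sub]

theorem frobeniusSum_mul_add (ζ c : k) (α : K) :
    frobeniusSum p (Module.finrank (ZMod p) k) (ψ ζ * (α + ψ c)) =
      frobeniusSum p (Module.finrank (ZMod p) k) (ψ ζ * α) +
        ψ (algebraMap (ZMod p) k (Algebra.trace (ZMod p) k (ζ * c))) := by
  rw [FiniteField.algebraMap_trace_eq_frobeniusSum, map_frobeniusSum, map_mul, mul_add,
    frobeniusSum_add]

end translates

section galois

variable {p : ℕ} [Fact p.Prime] {k : Type*} [Field k] [Finite k] [Algebra (ZMod p) k]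
  {F K : Type*} [Field F] [Field K] [Algebra F K] (φ : k →+* F) (α : K)

def galoisShifts : AddSubgroup k where
  carrier := {c | ∃ σ : K ≃ₐ[F] K, σ α = α + algebraMap F K (φ c)}
  zero_mem' := ⟨1, by simp⟩
  add_mem' := by
    rintro a b ⟨σ, hσ⟩ ⟨τ, hτ⟩
    refine ⟨σ * τ, ?_⟩
    rw [AlgEquiv.mul_apply, hτ, map_add, hσ, AlgEquiv.commutes, map_add, map_add, add_assoc]
  neg_mem' := by
    rintro a ⟨σ, hσ⟩
    refine ⟨σ⁻¹, ?_⟩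
    have h := congrArg σ.symm hσ
    rw [σ.symm_apply_apply, map_add, AlgEquiv.commutes] at h
    rw [AlgEquiv.aut_inv, map_neg, map_neg]
    linear_combination -h

variable {φ α}

theorem pow_finrank_le_natDegree_minpoly_of_galoisShifts_eq_top (hint : IsIntegral F α)
    (htop : galoisShifts φ α = ⊤) :
    p ^ Module.finrank (ZMod p) k ≤ (minpoly F α).natDegree := by
  classical
  have := Fintype.ofFinite k
  -- every translate `α + c` is a conjugate of `α`, hence a root of its minimal polynomial
  have hsub : (Finset.univ.image fun c => α + algebraMap F K (φ c)).val ⊆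
      ((minpoly F α).map (algebraMap F K)).roots := by
    intro x hx
    obtain ⟨c, -, rfl⟩ := Finset.mem_image.mp hx
    obtain ⟨σ, hσ⟩ := (galoisShifts φ α).eq_top_iff'.mp htop c
    rw [mem_roots (Polynomial.map_ne_zero (minpoly.ne_zero hint)), IsRoot, eval_map_algebraMap,
      ← hσ, ← minpoly.algEquiv_eq σ, minpoly.aeval]
  have hinj : Function.Injective fun c => α + algebraMap F K (φ c) :=
    fun a b h => φ.injective ((algebraMap F K).injective (add_left_cancel h))
  have hcard := card_le_degree_of_subset_roots hsub
  rwa [Finset.card_image_of_injective _ hinj, Finset.card_univ, ← Nat.card_eq_fintype_card,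
    FiniteField.natCard_eq_pow_finrank_zmod p, natDegree_map] at hcard

variable [CharP K p]

theorem irreducible_iff_galoisShifts_eq_top [Normal F K] {z : F}
    (hα : α ^ p ^ Module.finrank (ZMod p) k - α = algebraMap F K z) :
    Irreducible (X ^ p ^ Module.finrank (ZMod p) k - X - C z : F[X]) ↔
      galoisShifts φ α = ⊤ := by
  have hq := FiniteField.one_lt_pow_finrank_zmod p (k := k)
  set q := p ^ Module.finrank (ZMod p) k
  set f : F[X] := X ^ q - X - C z
  have hf : f.Monic := monic_X_pow_sub_X_sub_C hq z
  have hroot : ∀ c, aeval (α + algebraMap F K (φ c)) f = 0 := fun c => by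
    have h := ((pow_sub_self_eq_iff_exists_add ((algebraMap F K).comp φ)).mpr ⟨c, rfl⟩).trans hα
    simp only [f, map_sub, aeval_X_pow, aeval_X, aeval_C]
    exact sub_eq_zero.mpr h
  have hfα : aeval α f = 0 := by simpa using hroot 0
  constructor
  · intro hirr
    refine (AddSubgroup.eq_top_iff' _).mpr fun c => ?_
    have hmin : minpoly F (α + algebraMap F K (φ c)) = minpoly F α := by
      rw [← minpoly.eq_of_irreducible_of_monic hirr hfα hf,
        ← minpoly.eq_of_irreducible_of_monic hirr (hroot c) hf]
    exact (Normal.minpoly_eq_iff_mem_orbit K).mp hmin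
  · intro htop
    have hint : IsIntegral F α := ⟨f, hf, hfα⟩
    suffices f = minpoly F α by rw [this]; exact minpoly.irreducible hint
    exact eq_of_monic_of_dvd_of_natDegree_le (minpoly.monic hint) hf (minpoly.dvd F α hfα)
      ((natDegree_X_pow_sub_X_sub_C hq z).trans_le
        (pow_finrank_le_natDegree_minpoly_of_galoisShifts_eq_top hint htop))

theorem apply_frobeniusSum_mul_of_apply_eq_add (σ : K ≃ₐ[F] K) {ζ c : k}
    (hσ : σ α = α + algebraMap F K (φ c)) :
    σ (frobeniusSum p (Module.finrank (ZMod p) k) (algebraMap F K (φ ζ) * α)) =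
      frobeniusSum p (Module.finrank (ZMod p) k) (algebraMap F K (φ ζ) * α) +
        algebraMap F K (φ (algebraMap (ZMod p) k (Algebra.trace (ZMod p) k (ζ * c)))) := by
  calc σ (frobeniusSum p _ (algebraMap F K (φ ζ) * α))
      _ = frobeniusSum p _ (algebraMap F K (φ ζ) * (α + algebraMap F K (φ c))) := by
        rw [← RingHom.coe_coe, map_frobeniusSum, RingHom.coe_coe, map_mul, AlgEquiv.commutes, hσ]
      _ = _ := frobeniusSum_mul_add ((algebraMap F K).comp φ) ζ c α

theorem exists_pow_char_sub_self_eq_iff [IsGalois F K] {z : F}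
    (hα : α ^ p ^ Module.finrank (ZMod p) k - α = algebraMap F K z) (ζ : k) :
    (∃ y : F, y ^ p - y = φ ζ * z) ↔
      ∀ c ∈ galoisShifts φ α, Algebra.trace (ZMod p) k (ζ * c) = 0 := by
  set β := frobeniusSum p (Module.finrank (ZMod p) k) (algebraMap F K (φ ζ) * α) with hβdef
  have hβ : β ^ p - β = algebraMap F K (φ ζ * z) :=
    (frobeniusSum_mul_pow_char_sub_self ((algebraMap F K).comp φ) ζ α).trans
      (by rw [hα, map_mul]; rfl)
  constructor
  · rintro ⟨y, hy⟩ c ⟨σ, hσ⟩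
    have hfix : (β - algebraMap F K y) ^ p = β - algebraMap F K y := by
      have hy' : algebraMap F K y ^ p - algebraMap F K y = algebraMap F K (φ ζ * z) := by
        rw [← map_pow, ← map_sub, hy]
      rw [sub_pow_char]
      linear_combination hβ - hy'
    obtain ⟨x, hx⟩ : β - algebraMap F K y ∈ (algebraMap F K).fieldRange :=
      (bot_le : ⊥ ≤ (algebraMap F K).fieldRange) ((Subfield.mem_bot_iff_pow_eq_self K p).mpr hfix)
    have hβF : β = algebraMap F K (x + y) := by rw [map_add, hx]; ring
    have h := apply_frobeniusSum_mul_of_apply_eq_add σ (ζ := ζ) hσ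
    rwa [← hβdef, hβF, AlgEquiv.commutes, left_eq_add,
      map_eq_zero_iff _ (algebraMap F K).injective, map_eq_zero_iff _ φ.injective,
      map_eq_zero_iff _ (algebraMap (ZMod p) k).injective] at h
  · intro h
    have hfix : ∀ σ : K ≃ₐ[F] K, σ β = β := fun σ => by
      have hσα : (σ α) ^ p ^ Module.finrank (ZMod p) k - σ α =
          α ^ p ^ Module.finrank (ZMod p) k - α := by
        rw [← map_pow, ← map_sub, hα, AlgEquiv.commutes]
      obtain ⟨c, hc⟩ := (pow_sub_self_eq_iff_exists_add ((algebraMap F K).comp φ)).mp hσα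
      rw [hβdef, apply_frobeniusSum_mul_of_apply_eq_add σ hc, ← hβdef, h c ⟨σ, hc⟩,
        map_zero, map_zero, map_zero, add_zero]
    obtain ⟨y, hy⟩ := (InfiniteGalois.mem_range_algebraMap_iff_fixed β).mpr hfix
    refine ⟨y, (algebraMap F K).injective ?_⟩
    rw [map_sub, map_pow, hy, hβ]

end galois

theorem irreducible_X_pow_sub_X_sub_C_iff {p : ℕ} [Fact p.Prime] {k F : Type*} [Field k]
    [Finite k] [Algebra (ZMod p) k] [Field F] [CharP F p] (φ : k →+* F) (z : F) :
    Irreducible (X ^ p ^ Module.finrank (ZMod p) k - X - C z : F[X]) ↔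
      ∀ ζ : k, ζ ≠ 0 → ¬∃ y : F, y ^ p - y = φ ζ * z := by
  have hq := FiniteField.one_lt_pow_finrank_zmod p (k := k)
  set f : F[X] := X ^ p ^ Module.finrank (ZMod p) k - X - C z
  have hsep : f.Separable :=
    separable_X_pow_sub_X_sub_C p (dvd_pow_self p Module.finrank_pos.ne') z
  let K := f.SplittingField
  have : IsGalois F K := IsGalois.of_separable_splitting_field hsep
  have : CharP K p := charP_of_injective_algebraMap (algebraMap F K).injective p
  obtain ⟨α, hα⟩ : ∃ α : K, α ^ p ^ Module.finrank (ZMod p) k - α = algebraMap F K z := by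
    obtain ⟨α, hα⟩ := (SplittingField.splits f).exists_eval_eq_zero (by
      rw [degree_map, degree_eq_natDegree (monic_X_pow_sub_X_sub_C hq z).ne_zero,
        natDegree_X_pow_sub_X_sub_C hq z]
      exact_mod_cast hq.ne_bot)
    exact ⟨α, sub_eq_zero.mp (by simpa [f] using hα)⟩
  rw [irreducible_iff_galoisShifts_eq_top hα, ← (AddSubgroup.toZModSubmodule p).injective.eq_iff,
    OrderIso.map_top, Submodule.eq_top_iff_forall_trace_mul_eq_zero]
  simp only [AddSubgroup.mem_toZModSubmodule, ← exists_pow_char_sub_self_eq_iff hα]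
  exact forall_congr' fun ζ => not_imp_not.symm

theorem stmt3 (p e : ℕ) [Fact p.Prime] (he : 0 < e) (F : Type*) [Field F]
    (φ : GaloisField p e →+* F) (z : F) :
    List.TFAE [
      Irreducible ((X : F[X]) ^ p ^ e - X - C z),
      ∀ ζ : (GaloisField p e)ˣ, Irreducible ((X : F[X]) ^ p - X - C (φ ↑ζ * z)),
      ∀ ζ : (GaloisField p e)ˣ, ¬ ∃ y : F, ((X : F[X]) ^ p - X - C (φ ↑ζ * z)).IsRoot y] := by
  have : CharP F p := charP_of_injective_ringHom φ.injective p
  have hp : 1 < p := (Fact.out : p.Prime).one_lt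
  have hGF := irreducible_X_pow_sub_X_sub_C_iff φ z
  rw [GaloisField.finrank p he.ne'] at hGF
  have hZMod (a : F) := irreducible_X_pow_sub_X_sub_C_iff (ZMod.castHom (dvd_refl p) F) a
  simp only [Module.finrank_self, pow_one] at hZMod
  simp only [isRoot_X_pow_sub_X_sub_C_iff]
  tfae_have 1 ↔ 3 := hGF.trans ⟨fun h ζ => h ζ ζ.ne_zero, fun h ζ hζ => h (Units.mk0 ζ hζ)⟩
  tfae_have 2 → 3 := by
    rintro h ζ ⟨y, hy⟩
    refine (h ζ).not_isRoot_of_natDegree_ne_one ?_ ((isRoot_X_pow_sub_X_sub_C_iff p _ y).mpr hy)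
    rw [natDegree_X_pow_sub_X_sub_C hp]
    exact hp.ne'
  tfae_have 3 → 2 := by
    rintro h ζ
    rw [hZMod]
    rintro c hc ⟨y, hy⟩
    have hcast : φ (algebraMap (ZMod p) (GaloisField p e) c) = ZMod.castHom (dvd_refl p) F c :=
      RingHom.congr_fun (RingHom.ext_zmod (φ.comp (algebraMap _ _)) _) c
    have hc' : algebraMap (ZMod p) (GaloisField p e) c ≠ 0 :=
      (map_ne_zero_iff _ (algebraMap _ _).injective).mpr hc
    refine h (Units.mk0 _ (mul_ne_zero hc' ζ.ne_zero)) ⟨y, ?_⟩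
    rw [Units.val_mk0, map_mul, hcast, hy, mul_assoc]
  tfae_finish
end

section
/- Let k be a field containing F_q (q = p^e) and a primitive r-th root of unity, let n be coprime to q, with r/gcd(n,r) dividing q-1, and γ ∈ k^*. Let w be transcendental over k and v satisfy v^q - v = γw^n with [k(v,w):k(w)] = q. Then k(v,w)/k(w^r) is a Galois extension of degree qr. -/
/-!
Over `F = k(w^r)`, the element `w` is a root of `X^r - w^r`, which splits in `K` because `K`
contains a primitive `r`-th root of unity `ζ`. With `d = gcd(n, r)`, the element `v` is a root
of `(X^q - X)^(r/d) - γ^(r/d) (w^r)^(n/d) ∈ F[X]`, whose roots are the `ζ^(dj) v + α`, `α ∈ 𝔽_q`: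
since `ζ^d` has order dividing `q - 1`, it is fixed by Frobenius, so `ζ^(dj) v` is an
Artin–Schreier root of `X^q - X - ζ^(dj) γ w^n`. Both polynomials are separable, hence
`K = F(v, w)` is Galois over `F`. The degree is `[k(w) : k(w^r)] · [K : k(w)] = r q`, the first
factor by the degree formula for `k(X)/k(f(X))` applied to `f = X^r`.
-/

open Polynomial IntermediateField

theorem FiniteField.prod_X_sub_C_eq_X_pow_card_sub_X (𝔽 : Type*) [Field 𝔽] [Fintype 𝔽] :
    ∏ a : 𝔽, (X - C a) = X ^ Fintype.card 𝔽 - X := by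
  have hmonic : (X ^ Fintype.card 𝔽 - X : 𝔽[X]).Monic :=
    monic_X_pow_sub (by rw [degree_X]; exact_mod_cast Fintype.one_lt_card)
  have hsplits : (X ^ Fintype.card 𝔽 - X : 𝔽[X]).Splits := by
    rw [splits_iff_card_roots, FiniteField.roots_X_pow_card_sub_X,
      FiniteField.X_pow_card_sub_X_natDegree_eq 𝔽 Fintype.one_lt_card]
    rfl
  rw [hsplits.eq_prod_roots_of_monic hmonic, FiniteField.roots_X_pow_card_sub_X]
  rfl

section ArtinSchreier

variable {𝔽 L : Type*} [Field 𝔽] [Fintype 𝔽] [Field L]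

theorem X_pow_card_sub_X_sub_C_eq_prod (ι : 𝔽 →+* L) (u : L) :
    (X ^ Fintype.card 𝔽 - X - C (u ^ Fintype.card 𝔽 - u) : L[X]) =
      ∏ a : 𝔽, (X - C (u + ι a)) := by
  obtain ⟨p, _, n, hp, hcard⟩ := FiniteField.card' 𝔽
  have : Fact p.Prime := ⟨hp⟩
  have : CharP L p := charP_of_injective_ringHom ι.injective p
  have hshift := congrArg (fun P => (P.map ι).comp (X - C u))
    (FiniteField.prod_X_sub_C_eq_X_pow_card_sub_X 𝔽)
  simp only [Polynomial.map_prod, Polynomial.map_sub, Polynomial.map_pow, map_X, map_C,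
    prod_comp, sub_comp, pow_comp, X_comp, C_comp, hcard, sub_pow_char_pow] at hshift
  simp_rw [hcard, map_add, ← sub_sub, hshift, map_sub, map_pow]
  ring

theorem X_pow_card_sub_X_pow_sub_C_eq_prod (ι : 𝔽 →+* L) {m : ℕ} (hm : 0 < m) {μ : L}
    (hμ : IsPrimitiveRoot μ m) (hmq : m ∣ Fintype.card 𝔽 - 1) (u : L) :
    ((X ^ Fintype.card 𝔽 - X) ^ m - C ((u ^ Fintype.card 𝔽 - u) ^ m) : L[X]) =
      ∏ j ∈ Finset.range m, ∏ a : 𝔽, (X - C (μ ^ j * u + ι a)) := by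
  set q := Fintype.card 𝔽
  have hμq (j : ℕ) : (μ ^ j) ^ q = μ ^ j := by
    have hq : q = q - 1 + 1 := (Nat.sub_add_cancel Fintype.card_pos).symm
    rw [← pow_mul, mul_comm, pow_mul, hq, pow_succ, (hμ.pow_eq_one_iff_dvd _).2 hmq, one_mul]
  have hcomp : ((X ^ q - X) ^ m - C ((u ^ q - u) ^ m) : L[X]) =
      (X ^ m - C ((u ^ q - u) ^ m)).comp (X ^ q - X) := by
    simp only [sub_comp, pow_comp, X_comp, C_comp]
  rw [hcomp, X_pow_sub_C_eq_prod hμ hm rfl, prod_comp]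
  refine Finset.prod_congr rfl fun j _ => ?_
  rw [← X_pow_card_sub_X_sub_C_eq_prod ι, mul_pow, hμq, sub_comp, X_comp, C_comp, mul_sub]

end ArtinSchreier

theorem separable_X_pow_sub_X_pow_sub_C {L : Type*} [Field L] {q m : ℕ} (hq : (q : L) = 0)
    (hm : (m : L) ≠ 0) {b : L} (hb : b ≠ 0) : ((X ^ q - X) ^ m - C b : L[X]).Separable := by
  have hm0 : m ≠ 0 := by rintro rfl; exact hm Nat.cast_zero
  have hder : derivative ((X ^ q - X) ^ m - C b : L[X]) =
      C (-m : L) * (X ^ q - X) ^ (m - 1) := by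
    simp [derivative_pow, hq]
  have hcop : IsCoprime ((X ^ q - X) ^ m - C b : L[X]) ((X ^ q - X) ^ (m - 1)) := by
    refine IsCoprime.of_mul_right_left (z := X ^ q - X) ⟨-C b⁻¹, C b⁻¹, ?_⟩
    have hinv : C b⁻¹ * C b = 1 := by rw [← C_mul, inv_mul_cancel₀ hb, C_1]
    rw [← pow_succ, Nat.sub_add_cancel (Nat.pos_of_ne_zero hm0)]
    linear_combination hinv
  rwa [separable_def, hder,
    isCoprime_mul_unit_left_right (isUnit_C.2 (neg_ne_zero.2 hm).isUnit)]

theorem isGalois_of_adjoin_eq_top {F K : Type*} [Field F] [Field K] [Algebra F K] {S : Set K}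
    (hS : adjoin F S = ⊤)
    (h : ∀ x ∈ S, ∃ f : F[X], f.Separable ∧ (f.map (algebraMap F K)).Splits ∧ aeval x f = 0) :
    IsGalois F K := by
  have hmin : ∀ x ∈ S, IsSeparable F x ∧ ((minpoly F x).map (algebraMap F K)).Splits := by
    intro x hx
    obtain ⟨f, hsep, hsplit, hroot⟩ := h x hx
    have hdvd := minpoly.dvd F x hroot
    exact ⟨hsep.of_dvd hdvd,
      hsplit.of_dvd (Polynomial.map_ne_zero hsep.ne_zero) (Polynomial.map_dvd _ hdvd)⟩
  have : Algebra.IsSeparable F K := by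
    rw [← isSeparable_top, ← hS, isSeparable_adjoin_iff_isSeparable]
    exact fun x hx => (hmin x hx).1
  have : Normal F K := normal_iff.2 fun x =>
    ⟨(Algebra.IsSeparable.isSeparable F x).isIntegral,
      splits_of_mem_adjoin F K (fun y hy => ⟨(hmin y hy).1.isIntegral, (hmin y hy).2⟩)
        (hS ▸ mem_top : x ∈ adjoin F S)⟩
  exact ⟨⟩

theorem isGalois_of_kummer_of_artinSchreier {𝔽 F K : Type*} [Field 𝔽] [Fintype 𝔽] [Field F]
    [Field K] [Algebra F K] (ι : 𝔽 →+* F) {v w : K} (hvw : adjoin F {v, w} = ⊤) {r m : ℕ}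
    (hr : 0 < r) (hm : 0 < m) {ζ μ : K} (hζ : IsPrimitiveRoot ζ r) (hμ : IsPrimitiveRoot μ m)
    (hmq : m ∣ Fintype.card 𝔽 - 1) {a b : F} (ha : a ≠ 0) (hb : b ≠ 0)
    (hwa : w ^ r = algebraMap F K a) (hvb : (v ^ Fintype.card 𝔽 - v) ^ m = algebraMap F K b) :
    IsGalois F K := by
  have natCast_ne_zero {s : ℕ} (hs : 0 < s) {ξ : K} (hξ : IsPrimitiveRoot ξ s) :
      (s : F) ≠ 0 := by
    have : NeZero s := NeZero.of_pos hs
    intro h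
    exact hξ.neZero'.out (by rw [← map_natCast (algebraMap F K), h, map_zero])
  have hq : (Fintype.card 𝔽 : F) = 0 := by
    rw [← map_natCast ι, FiniteField.cast_card_eq_zero, map_zero]
  refine isGalois_of_adjoin_eq_top hvw ?_
  rintro x (rfl | rfl)
  · refine ⟨_, separable_X_pow_sub_X_pow_sub_C hq (natCast_ne_zero hm hμ) hb, ?_,
      by simp [hvb]⟩
    simp only [Polynomial.map_sub, Polynomial.map_pow, map_X, map_C, ← hvb,
      X_pow_card_sub_X_pow_sub_C_eq_prod ((algebraMap F K).comp ι) hm hμ hmq]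
    exact Splits.prod fun j _ => Splits.prod fun a _ => Splits.X_sub_C _
  · refine ⟨_, separable_X_pow_sub_C a (natCast_ne_zero hr hζ) ha, ?_, by simp [hwa]⟩
    simpa using X_pow_sub_C_splits_of_isPrimitiveRoot hζ hwa

theorem relfinrank_adjoin_pow_of_transcendental {k K : Type*} [Field k] [Field K] [Algebra k K]
    {w : K} (hw : Transcendental k w) (r : ℕ) :
    relfinrank (adjoin k {w ^ r}) (adjoin k {w}) = r := by
  let g : RatFunc k →ₐ[k] K :=
    (adjoin k {w}).val.comp (RatFunc.algEquivOfTranscendental w hw).toAlgHom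
  have hgX : g RatFunc.X = w := by simp [g]
  have key := relfinrank_map_map (adjoin k {(RatFunc.X : RatFunc k) ^ r}) ⊤ g
  rw [← RatFunc.adjoin_X, adjoin_map, adjoin_map, Set.image_singleton, Set.image_singleton,
    map_pow, hgX, RatFunc.adjoin_X, relfinrank_top_right, RatFunc.finrank_eq_max_natDegree] at key
  rw [key, ← RatFunc.algebraMap_X, ← map_pow, RatFunc.num_algebraMap, RatFunc.denom_algebraMap]
  simp

theorem stmt6_general (p e q n r : ℕ) [Fact p.Prime] (he : 0 < e) (hq : q = p ^ e)
    (k : Type*) [Field k] (φ : GaloisField p e →+* k)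
    (hζ : ∃ ζ : k, IsPrimitiveRoot ζ r) (hr : 0 < r)
    (hdvd : r / Nat.gcd n r ∣ q - 1) (γ : kˣ)
    (K : Type*) [Field K] [Algebra k K] (v w : K)
    (hw : Transcendental k w)
    (hvw : v ^ q - v = algebraMap k K ↑γ * w ^ n)
    (htop : IntermediateField.adjoin k {v, w} = ⊤)
    (hdeg : Module.finrank ↥(IntermediateField.adjoin k {w}) K = q) :
    IsGalois ↥(IntermediateField.adjoin k {w ^ r}) K ∧
      Module.finrank ↥(IntermediateField.adjoin k {w ^ r}) K = q * r := by
  have hFE : adjoin k {w ^ r} ≤ adjoin k {w} :=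
    adjoin_simple_le_iff.2 (pow_mem (mem_adjoin_simple_self k w) r)
  refine ⟨?_, by rw [← relfinrank_mul_finrank_top hFE,
    relfinrank_adjoin_pow_of_transcendental hw, hdeg, mul_comm]⟩
  have : Fintype (GaloisField p e) := Fintype.ofFinite _
  have hcard : Fintype.card (GaloisField p e) = q := by
    rw [hq, ← GaloisField.card p e he.ne', Nat.card_eq_fintype_card]
  obtain ⟨ζ, hζ⟩ := hζ
  replace hζ := hζ.map_of_injective (algebraMap k K).injective
  set d := n.gcd r
  have hrd : r = d * (r / d) := (Nat.mul_div_cancel' (Nat.gcd_dvd_right n r)).symm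
  have hrd_pos : 0 < r / d :=
    Nat.div_pos (Nat.gcd_le_right (m := n) hr) (Nat.gcd_pos_of_pos_right n hr)
  have hexp : n * (r / d) = r * (n / d) := by
    rw [← Nat.mul_div_assoc _ (Nat.gcd_dvd_right n r),
      ← Nat.mul_div_assoc _ (Nat.gcd_dvd_left n r), mul_comm]
  let a : adjoin k {w ^ r} := AdjoinSimple.gen k (w ^ r)
  have hw0 : w ≠ 0 := by rintro rfl; exact hw isAlgebraic_zero
  have ha : a ≠ 0 := fun h => pow_ne_zero r hw0 congr(($h : K))
  refine isGalois_of_kummer_of_artinSchreier ((algebraMap k _).comp φ)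
    (adjoin_eq_top_of_adjoin_eq_top k htop) hr hrd_pos hζ (hζ.pow hr hrd) (hcard ▸ hdvd)
    (b := algebraMap k _ γ ^ (r / d) * a ^ (n / d)) ha
    (mul_ne_zero (pow_ne_zero _ (by simp)) (pow_ne_zero _ ha)) rfl ?_
  rw [hcard, hvw, map_mul, map_pow, map_pow, ← IsScalarTower.algebraMap_apply,
    AdjoinSimple.algebraMap_gen, mul_pow, ← pow_mul, ← pow_mul, hexp]

theorem stmt6 (p e q n r : ℕ) [Fact p.Prime] (he : 0 < e) (hq : q = p ^ e)
    (k : Type*) [Field k] (φ : GaloisField p e →+* k)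
    (hζ : ∃ ζ : k, IsPrimitiveRoot ζ r) (hr : 0 < r)
    (hcop : Nat.Coprime n q) (hdvd : r / Nat.gcd n r ∣ q - 1) (γ : kˣ)
    (K : Type*) [Field K] [Algebra k K] (v w : K)
    (hw : Transcendental k w)
    (hvw : v ^ q - v = algebraMap k K ↑γ * w ^ n)
    (htop : IntermediateField.adjoin k {v, w} = ⊤)
    (hdeg : Module.finrank ↥(IntermediateField.adjoin k {w}) K = q) :
    IsGalois ↥(IntermediateField.adjoin k {w ^ r}) K ∧
      Module.finrank ↥(IntermediateField.adjoin k {w ^ r}) K = q * r :=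
  stmt6_general p e q n r he hq k φ hζ hr hdvd γ K v w hw hvw htop hdeg
end

section
/- For q a prime power with q > 3, the group PSL(2,q) contains a unique conjugacy class of involutions. -/
/-!
A lift `A ∈ SL(2, F)` of an involution of `PSL(2, F)` is non-scalar with scalar square, so the
Cayley–Hamilton identity `A ^ 2 = tr A • A - 1` forces `tr A = 0` and `A ^ 2 = -1`. If `v` is not
an eigenvector of `A`, the matrix `g` with columns `v, A v` satisfies `A g = g S` for
`S = !![0, -1; 1, 0]`. Replacing `g` by `(x + y A) g`, which commutes past `A`, multiplies `det g`
by `x ^ 2 + y ^ 2`, and over a finite field every element is a sum of two squares; so `g` can be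
taken in `SL(2, F)`. Hence every involution of `PSL(2, F)` is conjugate to the image of `S`.
-/

open Matrix MatrixGroups

theorem FiniteField.exists_sq_add_sq_eq {K : Type*} [Field K] [Fintype K] (c : K) :
    ∃ x y : K, x ^ 2 + y ^ 2 = c := by
  by_cases h2 : ringChar K = 2
  · obtain ⟨x, hx⟩ := FiniteField.isSquare_of_char_two h2 c
    exact ⟨x, 0, by rw [hx]; ring⟩
  · obtain ⟨a, b, hab⟩ := FiniteField.exists_root_sum_quadratic
      (f := Polynomial.X ^ 2) (g := Polynomial.X ^ 2 - Polynomial.C c)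
      (Polynomial.degree_X_pow 2) (Polynomial.degree_X_pow_sub_C two_pos _)
      (FiniteField.odd_card_of_char_ne_two h2)
    simp only [Polynomial.eval_pow, Polynomial.eval_X, Polynomial.eval_sub,
      Polynomial.eval_C] at hab
    exact ⟨a, b, by linear_combination hab⟩

theorem ModularGroup.coe_matrix_coe_S {R : Type*} [CommRing R] :
    ((S : SL(2, R)) : Matrix (Fin 2) (Fin 2) R) = !![0, -1; 1, 0] := by
  ext i j
  fin_cases i <;> fin_cases j <;> simp [coe_S]

namespace Matrix

section CommRing

variable {R : Type*} [CommRing R]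

theorem sq_eq_trace_smul_sub_det_smul (A : Matrix (Fin 2) (Fin 2) R) :
    A ^ 2 = A.trace • A - A.det • 1 := by
  ext i j
  fin_cases i <;> fin_cases j <;> simp [sq, mul_apply, trace_fin_two, det_fin_two] <;> ring

theorem det_smul_one_add_smul (x y : R) (A : Matrix (Fin 2) (Fin 2) R) :
    (x • 1 + y • A).det = x ^ 2 + x * y * A.trace + y ^ 2 * A.det := by
  simp [det_fin_two, trace_fin_two]
  ring

theorem mul_transpose_of_mulVec_of_sq_eq_neg_one {A : Matrix (Fin 2) (Fin 2) R}
    (hA : A ^ 2 = -1) (v : Fin 2 → R) :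
    A * (of ![v, A *ᵥ v])ᵀ = (of ![v, A *ᵥ v])ᵀ * !![0, -1; 1, 0] := by
  have hAAv : A *ᵥ (A *ᵥ v) = -v := by rw [mulVec_mulVec, ← sq, hA, neg_mulVec, one_mulVec]
  have h₀ := congrFun hAAv 0
  have h₁ := congrFun hAAv 1
  simp only [mulVec, dotProduct, Fin.sum_univ_two, Pi.neg_apply] at h₀ h₁
  ext i j
  fin_cases i <;> fin_cases j <;> simp [mul_apply, Fin.sum_univ_two]
  · linear_combination h₀
  · linear_combination h₁

end CommRing

section Field

variable {K : Type*} [Field K] {A : Matrix (Fin 2) (Fin 2) K}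

theorem trace_eq_zero_of_sq_mem_range_scalar (hA : A ∉ Set.range (scalar (Fin 2)))
    (hsq : A ^ 2 ∈ Set.range (scalar (Fin 2))) : A.trace = 0 := by
  obtain ⟨r, hr⟩ := hsq
  rw [scalar_apply, ← smul_one_eq_diagonal] at hr
  have hscalar : A.trace • A = (r + A.det) • (1 : Matrix (Fin 2) (Fin 2) K) := by
    rw [add_smul, hr, sq_eq_trace_smul_sub_det_smul]
    abel
  by_contra htr
  refine hA ⟨A.trace⁻¹ * (r + A.det), ?_⟩
  rw [scalar_apply, ← smul_one_eq_diagonal, mul_smul, ← hscalar, smul_smul, inv_mul_cancel₀ htr,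
    one_smul]

theorem exists_det_of_mulVec_ne_zero (hA : A ∉ Set.range (scalar (Fin 2))) :
    ∃ v, (of ![v, A *ᵥ v]).det ≠ 0 := by
  by_contra! h
  have h₀ := h ![1, 0]
  have h₁ := h ![0, 1]
  have h₂ := h ![1, 1]
  simp only [det_fin_two, of_apply, mulVec_fin_two, cons_val_zero, cons_val_one, cons_val',
    cons_val_fin_one, mul_one, mul_zero, one_mul, zero_mul, add_zero, zero_add, sub_zero,
    zero_sub, neg_eq_zero] at h₀ h₁ h₂
  have hdiag : A 1 1 = A 0 0 := by linear_combination h₂ - h₀ + h₁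
  refine hA ⟨A 0 0, ?_⟩
  ext i j
  fin_cases i <;> fin_cases j <;> simp [h₀, h₁, hdiag]

theorem exists_det_eq_one_mul_eq_mul_S [Fintype K] (hdet : A.det = 1) (htr : A.trace = 0)
    (hA : A ∉ Set.range (scalar (Fin 2))) :
    ∃ g : Matrix (Fin 2) (Fin 2) K, g.det = 1 ∧ A * g = g * !![0, -1; 1, 0] := by
  have hsq : A ^ 2 = -1 := by
    rw [sq_eq_trace_smul_sub_det_smul, htr, hdet, zero_smul, one_smul, zero_sub]
  obtain ⟨v, hv⟩ := exists_det_of_mulVec_ne_zero hA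
  obtain ⟨x, y, hxy⟩ := FiniteField.exists_sq_add_sq_eq (of ![v, A *ᵥ v]).det⁻¹
  have hcomm : Commute A (x • 1 + y • A) :=
    ((Commute.one_right A).smul_right x).add_right ((Commute.refl A).smul_right y)
  refine ⟨(x • 1 + y • A) * (of ![v, A *ᵥ v])ᵀ, ?_, ?_⟩
  · rw [det_mul, det_transpose, det_smul_one_add_smul, htr, hdet, mul_zero, add_zero, mul_one, hxy,
      inv_mul_cancel₀ hv]
  · rw [← mul_assoc, hcomm.eq, mul_assoc, mul_transpose_of_mulVec_of_sq_eq_neg_one hsq, mul_assoc]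

end Field

namespace SpecialLinearGroup

theorem mem_center_iff_coe_mem_range_scalar {n R : Type*} [DecidableEq n] [Fintype n]
    [CommRing R] {A : SpecialLinearGroup n R} :
    A ∈ Subgroup.center (SpecialLinearGroup n R) ↔ (A : Matrix n n R) ∈ Set.range (scalar n) := by
  rw [mem_center_iff]
  constructor
  · rintro ⟨r, -, hr⟩
    exact ⟨r, hr⟩
  · rintro ⟨r, hr⟩
    refine ⟨r, ?_, hr⟩
    simpa [← hr] using A.det_coe

variable {K : Type*} [Field K] [Fintype K]

theorem isConj_S_of_sq_mem_center {A : SL(2, K)} (hA : A ∉ Subgroup.center SL(2, K))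
    (hsq : A ^ 2 ∈ Subgroup.center SL(2, K)) : IsConj (ModularGroup.S : SL(2, K)) A := by
  rw [mem_center_iff_coe_mem_range_scalar] at hA hsq
  rw [coe_pow] at hsq
  obtain ⟨g, hg, hAg⟩ := exists_det_eq_one_mul_eq_mul_S A.det_coe
    (trace_eq_zero_of_sq_mem_range_scalar hA hsq) hA
  obtain ⟨g, rfl⟩ : ∃ G : SL(2, K), (G : Matrix (Fin 2) (Fin 2) K) = g := ⟨⟨g, hg⟩, rfl⟩
  exact ⟨toUnits g, Subtype.ext <| by
    rw [coe_mul, coe_mul, ModularGroup.coe_matrix_coe_S]; exact hAg.symm⟩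

theorem isConj_mk_S_of_orderOf_eq_two {x : SL(2, K) ⧸ Subgroup.center SL(2, K)}
    (hx : orderOf x = 2) : IsConj (QuotientGroup.mk (ModularGroup.S : SL(2, K))) x := by
  obtain ⟨A, rfl⟩ := QuotientGroup.mk_surjective x
  have hA : A ∉ Subgroup.center SL(2, K) := by
    rw [← QuotientGroup.eq_one_iff, ← orderOf_eq_one_iff, hx]
    norm_num
  have hsq : A ^ 2 ∈ Subgroup.center SL(2, K) := by
    rw [← QuotientGroup.eq_one_iff, QuotientGroup.mk_pow]
    simpa only [hx] using pow_orderOf_eq_one (A : SL(2, K) ⧸ Subgroup.center SL(2, K))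
  exact (QuotientGroup.mk' _).map_isConj (isConj_S_of_sq_mem_center hA hsq)

end SpecialLinearGroup

end Matrix

theorem stmt8_general (F : Type*) [Field F] [Fintype F]
    (x y : Matrix.SpecialLinearGroup (Fin 2) F ⧸
      Subgroup.center (Matrix.SpecialLinearGroup (Fin 2) F))
    (hx : orderOf x = 2) (hy : orderOf y = 2) : IsConj x y :=
  (Matrix.SpecialLinearGroup.isConj_mk_S_of_orderOf_eq_two hx).symm.trans
    (Matrix.SpecialLinearGroup.isConj_mk_S_of_orderOf_eq_two hy)

theorem stmt8 (p e q : ℕ) (hp : p.Prime) (he : 0 < e) (hq : q = p ^ e) (hq3 : 3 < q)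
    (F : Type*) [Field F] [Fintype F] (hF : Fintype.card F = q)
    (x y : Matrix.SpecialLinearGroup (Fin 2) F ⧸
      Subgroup.center (Matrix.SpecialLinearGroup (Fin 2) F))
    (hx : orderOf x = 2) (hy : orderOf y = 2) : IsConj x y :=
  stmt8_general F x y hx hy
end

section
/- Let q be an odd prime power. The number of involutions in PGL(2,q) is exactly q^2. -/
/-!
By Cayley–Hamilton, `g * g = tr g • g - det g • 1` for a `2 × 2` matrix, so the image of
`g ∈ GL(2, F)` in `PGL(2, F)` squares to `1` iff `tr g = 0` or `g` is scalar; in odd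
characteristic a scalar unit has nonzero trace, so the involutions of `PGL(2, F)` are exactly
the images of the traceless elements of `GL(2, F)`. These are the matrices `!![a, b; c, -a]`
with `a² + b c ≠ 0`; for each `b` the equation `a² + b c = 0` has `q` solutions `(a, c)`, so
there are `q³ - q² = q² (q - 1)` of them. Each involution has exactly `|Z(GL(2, F))| = q - 1`
lifts.
-/

open Matrix

lemma QuotientGroup.card_subtype_mk {G : Type*} [Group G] (H : Subgroup G) (P : G ⧸ H → Prop) :
    Nat.card {g : G // P g} = Nat.card H * Nat.card {x : G ⧸ H // P x} := by
  rw [← Nat.card_prod]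
  exact Nat.card_congr (QuotientGroup.preimageMkEquivSubgroupProdSet H {x | P x})

noncomputable def Units.subtypeEquivSubtypeIsUnit {M : Type*} [Monoid M] (P : M → Prop) :
    {u : Mˣ // P u} ≃ {a : {a : M // P a} // IsUnit a.1} where
  toFun u := ⟨⟨u.1, u.2⟩, u.1.isUnit⟩
  invFun a := ⟨a.2.unit, a.1.2⟩
  left_inv _ := Subtype.ext (Units.ext rfl)
  right_inv _ := rfl

section Quadric

variable {K : Type*} [Field K] [Fintype K]

lemma sum_boole_mul_self_add_mul_eq_zero [DecidableEq K] (b : K) :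
    (∑ a : K, ∑ c : K, if a * a + b * c = 0 then 1 else 0) = Fintype.card K := by
  by_cases hb : b = 0
  · simp [hb]
  · have (a c : K) : a * a + b * c = 0 ↔ c = -(a * a) / b := by
      rw [eq_div_iff hb, mul_comm c, add_eq_zero_iff_eq_neg']
    simp [this]

lemma card_mul_self_add_mul_eq_zero :
    Nat.card {v : K × K × K // v.1 * v.1 + v.2.1 * v.2.2 = 0} = Fintype.card K ^ 2 := by
  classical
  rw [Nat.card_eq_fintype_card, Fintype.card_subtype, Finset.card_filter]
  simp only [Fintype.sum_prod_type]
  rw [Finset.sum_comm]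
  simp only [sum_boole_mul_self_add_mul_eq_zero, Finset.sum_const, Finset.card_univ, smul_eq_mul,
    sq]

end Quadric

namespace Matrix

section FinTwo

variable {R : Type*}

lemma mul_self_fin_two [CommRing R] (A : Matrix (Fin 2) (Fin 2) R) :
    A * A = A.trace • A - scalar (Fin 2) A.det := by
  rw [eta_fin_two A]
  ext i j
  fin_cases i <;> fin_cases j <;> simp [trace_fin_two, det_fin_two] <;> ring

lemma det_fin_two_of_trace_eq_zero [CommRing R] {A : Matrix (Fin 2) (Fin 2) R}
    (hA : A.trace = 0) : A.det = -(A 0 0 * A 0 0 + A 0 1 * A 1 0) := by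
  rw [trace_fin_two, add_eq_zero_iff_eq_neg'] at hA
  rw [det_fin_two, hA]
  ring

def tracelessFinTwoEquiv [Ring R] :
    {A : Matrix (Fin 2) (Fin 2) R // A.trace = 0} ≃ R × R × R where
  toFun A := (A.1 0 0, A.1 0 1, A.1 1 0)
  invFun v := ⟨!![v.1, v.2.1; v.2.2, -v.1], by simp [trace_fin_two]⟩
  left_inv := by
    rintro ⟨A, hA⟩
    rw [trace_fin_two, add_eq_zero_iff_eq_neg'] at hA
    ext i j
    fin_cases i <;> fin_cases j <;> simp [hA]
  right_inv _ := rfl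

end FinTwo

variable {n K : Type*} [Fintype n] [DecidableEq n] [Field K]

lemma smul_mem_range_scalar_iff {c : K} {A : Matrix n n K} :
    c • A ∈ Set.range (scalar n) ↔ c = 0 ∨ A ∈ Set.range (scalar n) := by
  constructor
  · rintro ⟨d, hd⟩
    refine or_iff_not_imp_left.mpr fun hc ↦ ⟨c⁻¹ * d, ?_⟩
    rw [map_mul, hd, scalar_apply, ← smul_eq_diagonal_mul, inv_smul_smul₀ hc]
  · rintro (rfl | ⟨d, rfl⟩)
    · exact ⟨0, by simp⟩
    · exact ⟨c * d, by simp [scalar_apply, smul_eq_diagonal_mul]⟩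

lemma mul_self_mem_range_scalar_iff {A : Matrix (Fin 2) (Fin 2) K} :
    A * A ∈ Set.range (scalar (Fin 2)) ↔ A.trace = 0 ∨ A ∈ Set.range (scalar (Fin 2)) := by
  rw [← smul_mem_range_scalar_iff, mul_self_fin_two, ← RingHom.coe_range, SetLike.mem_coe,
    SetLike.mem_coe, sub_eq_add_neg,
    add_mem_cancel_right (neg_mem (RingHom.mem_range_self _ A.det))]

lemma trace_ne_zero_of_mem_range_scalar (hn : (Fintype.card n : K) ≠ 0) {A : Matrix n n K}
    (hA : IsUnit A) (hsc : A ∈ Set.range (scalar n)) : A.trace ≠ 0 := by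
  obtain ⟨c, rfl⟩ := hsc
  have : Nonempty n := Fintype.card_pos_iff.mp (Nat.pos_of_ne_zero fun h ↦ hn (by simp [h]))
  have hc : c ≠ 0 := by
    rintro rfl
    simp at hA
  simp [scalar_apply, trace_diagonal, hc, hn]

namespace GeneralLinearGroup

lemma scalar_injective [Nonempty n] : Function.Injective (scalar n : Kˣ →* GL n K) :=
  fun _ _ h ↦ Units.ext <| scalar_inj.mp <| congrArg Units.val h

lemma card_center [Nonempty n] : Nat.card (Subgroup.center (GL n K)) = Nat.card Kˣ := by
  rw [center_eq_range_scalar]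
  exact Nat.card_congr (MonoidHom.ofInjective scalar_injective).toEquiv.symm

theorem orderOf_mk_eq_two_iff (h2 : (2 : K) ≠ 0) (g : GL (Fin 2) K) :
    orderOf (g : GL (Fin 2) K ⧸ Subgroup.center (GL (Fin 2) K)) = 2 ↔
      (g : Matrix (Fin 2) (Fin 2) K).trace = 0 := by
  have htr := trace_ne_zero_of_mem_range_scalar (by simpa using h2) g.isUnit
  rw [orderOf_eq_prime_iff, ← QuotientGroup.mk_pow, Ne, QuotientGroup.eq_one_iff,
    QuotientGroup.eq_one_iff, mem_center_iff_val_mem_range_scalar,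
    mem_center_iff_val_mem_range_scalar, Units.val_pow_eq_pow_val, sq,
    mul_self_mem_range_scalar_iff]
  tauto

lemma card_trace_eq_zero [Fintype K] :
    Nat.card {g : GL (Fin 2) K // (g : Matrix (Fin 2) (Fin 2) K).trace = 0} =
      Fintype.card K ^ 2 * (Fintype.card K - 1) := by
  classical
  have e := (Units.subtypeEquivSubtypeIsUnit _).trans <|
    tracelessFinTwoEquiv.subtypeEquiv
      (q := fun v : K × K × K ↦ ¬ v.1 * v.1 + v.2.1 * v.2.2 = 0) fun A ↦ by
        rw [isUnit_iff_isUnit_det, isUnit_iff_ne_zero, det_fin_two_of_trace_eq_zero A.2,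
          neg_ne_zero]
        rfl
  have hquadric := card_mul_self_add_mul_eq_zero (K := K)
  rw [Nat.card_eq_fintype_card] at hquadric
  rw [Nat.card_congr e, Nat.card_eq_fintype_card, Fintype.card_subtype_compl, hquadric,
    Fintype.card_prod, Fintype.card_prod, Nat.mul_sub_one, pow_two, mul_assoc]

end GeneralLinearGroup

end Matrix

theorem stmt9_general (q : ℕ) (hodd : Odd q)
    (F : Type*) [Field F] [Fintype F] (hF : Fintype.card F = q) :
    Nat.card {x : Matrix.GeneralLinearGroup (Fin 2) F ⧸
        Subgroup.center (Matrix.GeneralLinearGroup (Fin 2) F) // orderOf x = 2} = q ^ 2 := by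
  have h2 : (2 : F) ≠ 0 := Ring.two_ne_zero fun hchar ↦ by
    have := FiniteField.even_card_of_char_two hchar
    rw [hF, Nat.odd_iff.mp hodd] at this
    exact one_ne_zero this
  have hq1 : 0 < q - 1 := by
    have := Fintype.one_lt_card (α := F)
    omega
  have hunits : Nat.card Fˣ = q - 1 := by
    rw [Nat.card_units, Nat.card_eq_fintype_card, hF]
  refine Nat.eq_of_mul_eq_mul_left hq1 ?_
  calc (q - 1) * Nat.card {x : GL (Fin 2) F ⧸ Subgroup.center (GL (Fin 2) F) // orderOf x = 2}
      = Nat.card {g : GL (Fin 2) F //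
          orderOf (g : GL (Fin 2) F ⧸ Subgroup.center (GL (Fin 2) F)) = 2} := by
        rw [QuotientGroup.card_subtype_mk _ fun x ↦ orderOf x = 2,
          GeneralLinearGroup.card_center, hunits]
    _ = Nat.card {g : GL (Fin 2) F // (g : Matrix (Fin 2) (Fin 2) F).trace = 0} := by
        simp_rw [GeneralLinearGroup.orderOf_mk_eq_two_iff h2]
    _ = (q - 1) * q ^ 2 := by rw [GeneralLinearGroup.card_trace_eq_zero, hF, mul_comm]

theorem stmt9 (p e q : ℕ) (hp : p.Prime) (hodd : Odd q) (he : 0 < e) (hq : q = p ^ e)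
    (F : Type*) [Field F] [Fintype F] (hF : Fintype.card F = q) :
    Nat.card {x : Matrix.GeneralLinearGroup (Fin 2) F ⧸
        Subgroup.center (Matrix.GeneralLinearGroup (Fin 2) F) // orderOf x = 2} = q ^ 2 :=
  stmt9_general q hodd F hF
end

section
/- Let q be an odd prime power. The number of involutions in PSL(2,q) is (q^2-q)/2 if q ≡ 3 (mod 4), and (q^2+q)/2 if q ≡ 1 (mod 4). -/
/-!
By Cayley–Hamilton, `g² = tr(g)·g - 1` for `g ∈ SL(2, F)`. When `2 ≠ 0` this shows that `g² = 1`
forces `g = ±1`, so the involutions of `PSL(2, F) = SL(2, F)/{±1}` are exactly the images of the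
elements with `g² = -1`, i.e. of the trace-zero matrices `!![a, b; c, -a]` with `bc = -1 - a²`, and
each has two preimages `±g`. Counting `(a, b, c)` gives `q(q - 1) + q·#{a | a² = -1}`, and
`#{a | a² = -1} = 1 + χ₄(q)` is `0` or `2` according as `q ≡ 3` or `q ≡ 1 (mod 4)`.
-/

open Matrix Finset
open scoped MatrixGroups

section GroupWithZero

variable {G₀ : Type*} [GroupWithZero G₀] [Fintype G₀] [DecidableEq G₀]

lemma Fintype.card_subtype_mul_eq (b k : G₀) :
    Fintype.card {c : G₀ // b * c = k} =
      if b = 0 then (if k = 0 then Fintype.card G₀ else 0) else 1 := by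
  split_ifs with hb hk
  · simp [hb, hk]
  · rw [Fintype.card_eq_zero_iff]
    exact ⟨fun c ↦ hk (by simpa [hb] using c.2.symm)⟩
  · rw [Fintype.card_eq_one_iff]
    exact ⟨⟨b⁻¹ * k, mul_inv_cancel_left₀ hb k⟩,
      fun ⟨c, hc⟩ ↦ Subtype.ext ((eq_inv_mul_iff_mul_eq₀ hb).mpr hc)⟩

lemma Fintype.sum_card_subtype_mul_eq (k : G₀) :
    ∑ b : G₀, Fintype.card {c : G₀ // b * c = k} =
      (if k = 0 then Fintype.card G₀ else 0) + (Fintype.card G₀ - 1) := by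
  simp [Fintype.card_subtype_mul_eq, sum_ite, filter_eq', filter_ne', card_erase_of_mem]

end GroupWithZero

lemma Matrix.mul_self_fin_two_s10 {R : Type*} [CommRing R] (A : Matrix (Fin 2) (Fin 2) R) :
    A * A = A.trace • A - A.det • 1 := by
  ext i j
  fin_cases i <;> fin_cases j <;> simp [mul_apply, trace_fin_two, det_fin_two] <;> ring

namespace Matrix.SpecialLinearGroup

section CommRing

variable {R : Type*} [CommRing R]

lemma SL2_coe_neg_one : ((-1 : SL(2, R)) : Matrix (Fin 2) (Fin 2) R) = -1 := by
  rw [coe_neg, coe_one]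

def SL2TraceZeroEquiv :
    {g : SL(2, R) // (g : Matrix (Fin 2) (Fin 2) R).trace = 0} ≃
      Σ ab : R × R, {c : R // ab.2 * c = -1 - ab.1 ^ 2} where
  toFun g := ⟨(g.1 0 0, g.1 0 1), g.1 1 0, by
    have hdet := g.1.det_coe
    have htr := g.2
    rw [det_fin_two] at hdet
    rw [trace_fin_two] at htr
    linear_combination -hdet + g.1 0 0 * htr⟩
  invFun x := ⟨⟨!![x.1.1, x.1.2; x.2.1, -x.1.1], by
    rw [det_fin_two_of]; linear_combination -x.2.2⟩, by simp [trace_fin_two]⟩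
  left_inv g := by
    have htr := g.2
    rw [trace_fin_two, add_eq_zero_iff_eq_neg'] at htr
    ext i j
    fin_cases i <;> fin_cases j <;> simp [htr]
  right_inv _ := rfl

lemma SL2_neg_one_ne_one (h2 : (2 : R) ≠ 0) : (-1 : SL(2, R)) ≠ 1 := fun h ↦ by
  have := congrFun₂ (congrArg (fun A : SL(2, R) ↦ (A : Matrix (Fin 2) (Fin 2) R)) h) 0 0
  simp only [SL2_coe_neg_one, coe_one, neg_apply, one_apply_eq] at this
  exact h2 (by linear_combination -this)

variable [NoZeroDivisors R]

lemma SL2_mul_self_eq_neg_one_iff (g : SL(2, R)) :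
    g * g = -1 ↔ (g : Matrix (Fin 2) (Fin 2) R).trace = 0 := by
  refine Subtype.ext_iff.trans ?_
  rw [coe_mul, mul_self_fin_two_s10, g.det_coe, one_smul, SL2_coe_neg_one, sub_eq_neg_self]
  refine ⟨fun h ↦ ?_, fun h ↦ by rw [h, zero_smul]⟩
  have := congrArg det h
  rw [det_smul, g.det_coe, Fintype.card_fin, mul_one, det_zero] at this
  exact pow_eq_zero_iff two_ne_zero |>.mp this

lemma SL2_mem_center_iff {g : SL(2, R)} : g ∈ Subgroup.center SL(2, R) ↔ g = 1 ∨ g = -1 := by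
  rw [mem_center_iff, Fintype.card_fin]
  constructor
  · rintro ⟨r, hr, hg⟩
    rw [sq, mul_self_eq_one_iff] at hr
    rcases hr with rfl | rfl
    · exact .inl (Subtype.ext (by rw [← hg, map_one, coe_one]))
    · exact .inr (Subtype.ext (by rw [← hg, map_neg, map_one, SL2_coe_neg_one]))
  · rintro (rfl | rfl)
    · exact ⟨1, one_pow 2, by rw [map_one, coe_one]⟩
    · exact ⟨-1, neg_one_sq, by rw [map_neg, map_one, SL2_coe_neg_one]⟩

lemma SL2_mem_center_of_mul_self_eq_one (h2 : (2 : R) ≠ 0) {g : SL(2, R)} (hg : g * g = 1) :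
    g ∈ Subgroup.center SL(2, R) := by
  have hinv := congrArg (fun A : SL(2, R) ↦ (A : Matrix (Fin 2) (Fin 2) R))
    (inv_eq_of_mul_eq_one_right hg)
  simp only [SL2_inv_expl] at hinv
  have eq_zero_of_neg_eq {a : R} (h : -a = a) : a = 0 :=
    (mul_eq_zero.mp (by linear_combination -h : (2 : R) * a = 0)).resolve_left h2
  have h00 : g 1 1 = g 0 0 := by simpa using congrFun₂ hinv 0 0
  have h01 : g 0 1 = 0 := eq_zero_of_neg_eq (by simpa using congrFun₂ hinv 0 1)
  have h10 : g 1 0 = 0 := eq_zero_of_neg_eq (by simpa using congrFun₂ hinv 1 0)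
  refine mem_center_iff.mpr ⟨g 0 0, ?_, ?_⟩
  · have hdet := g.det_coe
    rw [det_fin_two, h00, h01, zero_mul, sub_zero] at hdet
    rwa [Fintype.card_fin, sq]
  · ext i j
    fin_cases i <;> fin_cases j <;> simp [h00, h01, h10]

lemma SL2_card_center (h2 : (2 : R) ≠ 0) : Nat.card (Subgroup.center SL(2, R)) = 2 := by
  have : (Subgroup.center SL(2, R) : Set SL(2, R)) = {1, -1} := by
    ext g
    exact SL2_mem_center_iff
  rw [← SetLike.coe_sort_coe, this, Nat.card_coe_set_eq,
    Set.ncard_pair (SL2_neg_one_ne_one h2).symm]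

lemma PSL2_orderOf_mk_eq_two_iff (h2 : (2 : R) ≠ 0) (g : SL(2, R)) :
    orderOf (g : PSL(2, R)) = 2 ↔ g * g = -1 := by
  rw [orderOf_eq_prime_iff, ne_eq, sq, ← QuotientGroup.mk_mul, QuotientGroup.eq_one_iff,
    QuotientGroup.eq_one_iff, SL2_mem_center_iff]
  constructor
  · rintro ⟨hg | hg, hcenter⟩
    · exact (hcenter (SL2_mem_center_of_mul_self_eq_one h2 hg)).elim
    · exact hg
  · intro hg
    refine ⟨.inr hg, fun hcenter ↦ SL2_neg_one_ne_one h2 ?_⟩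
    rcases SL2_mem_center_iff.mp hcenter with rfl | rfl <;> simpa using hg.symm

lemma PSL2_two_mul_card_orderOf_eq_two (h2 : (2 : R) ≠ 0) :
    2 * Nat.card {x : PSL(2, R) // orderOf x = 2} = Nat.card {g : SL(2, R) // g * g = -1} := by
  have := Nat.card_congr <|
    (QuotientGroup.preimageMkEquivSubgroupProdSet _ {x : PSL(2, R) | orderOf x = 2}).symm.trans <|
      Equiv.subtypeEquivRight fun g ↦ PSL2_orderOf_mk_eq_two_iff h2 g
  rwa [Nat.card_prod, SL2_card_center h2] at this

end CommRing

section FiniteField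

variable {F : Type*} [Field F] [Fintype F] [DecidableEq F]

lemma SL2_card_trace_eq_zero :
    Fintype.card {g : SL(2, F) // (g : Matrix (Fin 2) (Fin 2) F).trace = 0} =
      Fintype.card F * Fintype.card {a : F // a ^ 2 = -1} +
        Fintype.card F * (Fintype.card F - 1) := by
  rw [Fintype.card_congr SL2TraceZeroEquiv, Fintype.card_sigma, Fintype.sum_prod_type]
  simp only [Fintype.sum_card_subtype_mul_eq]
  simp [sub_eq_zero, eq_comm (a := (-1 : F)), sum_add_distrib, sum_ite, Fintype.card_subtype,
    mul_comm]

lemma SL2_card_mul_self_eq_neg_one (hF : ringChar F ≠ 2) :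
    (Nat.card {g : SL(2, F) // g * g = -1} : ℤ) =
      Fintype.card F ^ 2 + ZMod.χ₄ (Fintype.card F) * Fintype.card F := by
  have hsqrt : (Fintype.card {a : F // a ^ 2 = -1} : ℤ) = ZMod.χ₄ (Fintype.card F) + 1 := by
    rw [Fintype.card_subtype, ← Set.toFinset_ofPred, quadraticChar_card_sqrts hF,
      quadraticChar_neg_one hF]
  rw [Nat.card_congr (Equiv.subtypeEquivRight SL2_mul_self_eq_neg_one_iff),
    Nat.card_eq_fintype_card, SL2_card_trace_eq_zero]
  push_cast [Nat.one_le_iff_ne_zero.mpr Fintype.card_ne_zero, hsqrt]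
  ring

end FiniteField

end Matrix.SpecialLinearGroup

open Matrix.SpecialLinearGroup in
theorem stmt10_general (q : ℕ) (hodd : Odd q)
    (F : Type*) [Field F] [Fintype F] (hF : Fintype.card F = q) :
    (q % 4 = 3 →
      Nat.card {x : Matrix.SpecialLinearGroup (Fin 2) F ⧸
          Subgroup.center (Matrix.SpecialLinearGroup (Fin 2) F) // orderOf x = 2}
        = (q ^ 2 - q) / 2) ∧
    (q % 4 = 1 →
      Nat.card {x : Matrix.SpecialLinearGroup (Fin 2) F ⧸
          Subgroup.center (Matrix.SpecialLinearGroup (Fin 2) F) // orderOf x = 2}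
        = (q ^ 2 + q) / 2) := by
  classical
  have hchar : ringChar F ≠ 2 := by
    rw [Ne, FiniteField.even_card_iff_char_two, hF, ← Nat.even_iff, Nat.not_even_iff_odd]
    exact hodd
  have hcount := congrArg (Nat.cast : ℕ → ℤ)
    (PSL2_two_mul_card_orderOf_eq_two (R := F) (Ring.two_ne_zero hchar))
  rw [SL2_card_mul_self_eq_neg_one hchar, hF, ← Nat.cast_pow] at hcount
  -- unfold `PSL(2, F)` so that `omega` sees the same atom as in the goal
  dsimp only [Matrix.ProjectiveSpecialLinearGroup] at hcount
  have hq : q ≤ q ^ 2 := Nat.le_self_pow two_ne_zero q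
  generalize q ^ 2 = m at hcount hq ⊢
  refine ⟨fun hq4 ↦ ?_, fun hq4 ↦ ?_⟩
  · rw [ZMod.χ₄_nat_three_mod_four hq4] at hcount
    omega
  · rw [ZMod.χ₄_nat_one_mod_four hq4] at hcount
    omega

theorem stmt10 (p e q : ℕ) (hp : p.Prime) (hodd : Odd q) (he : 0 < e) (hq : q = p ^ e)
    (F : Type*) [Field F] [Fintype F] (hF : Fintype.card F = q) :
    (q % 4 = 3 →
      Nat.card {x : Matrix.SpecialLinearGroup (Fin 2) F ⧸
          Subgroup.center (Matrix.SpecialLinearGroup (Fin 2) F) // orderOf x = 2}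
        = (q ^ 2 - q) / 2) ∧
    (q % 4 = 1 →
      Nat.card {x : Matrix.SpecialLinearGroup (Fin 2) F ⧸
          Subgroup.center (Matrix.SpecialLinearGroup (Fin 2) F) // orderOf x = 2}
        = (q ^ 2 + q) / 2) :=
  stmt10_general q hodd F hF
end

section
/- Let q be an odd prime power. Then PGL(2,q) contains a dihedral subgroup of order 2(q+1). -/
/-!
Identify `F²` with `K = 𝔽_{q²}` as an `F`-vector space. Multiplication by a generator `ζ` of `Kˣ`
and the Frobenius `x ↦ x ^ q` are elements `r`, `s` of `GL_F(K) ≅ GL(2, q)`. Multiplication by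
`ζ ^ k` is a scalar exactly when `ζ ^ k` is fixed by the Frobenius, i.e. when `q + 1 ∣ k`
(`ζ ^ (q + 1)` is the norm of `ζ`), so `r` has order `q + 1` in `PGL(2, q)`. Moreover `s` is an
involution with `s r s = r ^ q = r⁻¹`, and `s` is no scalar multiple of a multiplication map
because the Frobenius of `K / F` is nontrivial. Hence `⟨r, s⟩` is dihedral of order `2 (q + 1)`.
-/

open Subgroup

theorem exists_subgroup_mulEquiv_dihedralGroup {G : Type*} [Group G] {n : ℕ} [NeZero n]
    {r s : G} (hr : orderOf r = n) (hs : s * s = 1) (hsr : s * r * s = r⁻¹)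
    (hs_mem : s ∉ zpowers r) :
    ∃ H : Subgroup G, Nonempty (H ≃* DihedralGroup n) := by
  let ρ : ZMod n → G := fun i ↦ r ^ i.val
  have ρ_add (i j : ZMod n) : ρ (i + j) = ρ i * ρ j := by
    simp only [ρ, ZMod.val_add, ← hr, pow_mod_orderOf, pow_add]
  have ρ_sub (i j : ZMod n) : ρ (j - i) = (ρ i)⁻¹ * ρ j := by
    rw [eq_inv_mul_iff_mul_eq, ← ρ_add, add_sub_cancel]
  have ρ_mul_s (i : ZMod n) : ρ i * s = s * (ρ i)⁻¹ := by
    have s_inv : s⁻¹ = s := inv_eq_of_mul_eq_one_right hs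
    have hconj : s * ρ i * s = (ρ i)⁻¹ := by
      calc s * ρ i * s = (s * r * s⁻¹) ^ i.val := by rw [conj_pow, s_inv]
        _ = (ρ i)⁻¹ := by rw [s_inv, hsr, inv_pow]
    calc ρ i * s = s * s * ρ i * s := by rw [hs, one_mul]
      _ = s * (s * ρ i * s) := by simp only [mul_assoc]
      _ = s * (ρ i)⁻¹ := by rw [hconj]
  let f : DihedralGroup n →* G :=
    { toFun := fun
        | .r i => ρ i
        | .sr i => s * ρ i
      map_one' := by
        show r ^ (0 : ZMod n).val = 1
        rw [ZMod.val_zero, pow_zero]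
      map_mul' := by
        rintro (i | i) (j | j)
        · exact ρ_add i j
        · show s * ρ (j - i) = ρ i * (s * ρ j)
          rw [ρ_sub, ← mul_assoc, ← mul_assoc (ρ i), ρ_mul_s]
        · show s * ρ (i + j) = s * ρ i * ρ j
          rw [ρ_add, mul_assoc]
        · show ρ (j - i) = s * ρ i * (s * ρ j)
          rw [ρ_sub, mul_assoc s, ← mul_assoc (ρ i), ρ_mul_s, ← mul_assoc, ← mul_assoc, hs,
            one_mul] }
  have hf : Function.Injective f := by
    rw [injective_iff_map_eq_one]
    rintro (i | i) h
    · have hdvd := orderOf_dvd_of_pow_eq_one (show r ^ i.val = 1 from h)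
      rw [hr] at hdvd
      rw [(ZMod.val_eq_zero i).mp (Nat.eq_zero_of_dvd_of_lt hdvd (ZMod.val_lt i)),
        DihedralGroup.one_def]
    · refine absurd ?_ hs_mem
      rw [eq_inv_of_mul_eq_one_left h]
      exact inv_mem (npow_mem_zpowers r i.val)
  exact ⟨f.range, ⟨(MonoidHom.ofInjective hf).symm⟩⟩

theorem MulEquiv.map_center {G H : Type*} [Group G] [Group H] (e : G ≃* H) :
    (center G).map e.toMonoidHom = center H := by
  ext x
  rw [mem_map_equiv, ← SetLike.mem_coe, ← SetLike.mem_coe, coe_center, coe_center,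
    ← MulEquivClass.apply_mem_center_iff e, e.apply_symm_apply]

theorem FiniteField.exists_finrank_eq (F : Type*) [Field F] [Finite F] {n : ℕ} (hn : n ≠ 0) :
    ∃ (K : Type) (_ : Field K) (_ : Finite K) (_ : Algebra F K), Module.finrank F K = n := by
  have := Fintype.ofFinite F
  obtain ⟨p, _, k, hp, hcard⟩ := FiniteField.card' F
  have := Fact.mk hp
  let := ZMod.algebra F p
  have hF : Module.finrank (ZMod p) F = k :=
    Nat.pow_right_injective hp.two_le (by simp only [FiniteField.pow_finrank_eq_card, hcard])
  have hL : Module.finrank (ZMod p) (GaloisField p (k * n)) = k * n :=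
    GaloisField.finrank p (mul_ne_zero k.ne_zero hn)
  obtain ⟨f⟩ := FiniteField.nonempty_algHom_of_finrank_dvd (F := ZMod p) (K := F)
    (L := GaloisField p (k * n)) (by rw [hF, hL]; exact dvd_mul_right _ _)
  algebraize [f.toRingHom]
  refine ⟨GaloisField p (k * n), inferInstance, inferInstance, inferInstance, ?_⟩
  have := Module.finrank_mul_finrank (ZMod p) F (GaloisField p (k * n))
  rw [hF, hL] at this
  exact Nat.eq_of_mul_eq_mul_left k.pos this

namespace Algebra

variable (F K : Type*) [Field F] [Field K] [Algebra F K]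

noncomputable def lmulUnits : Kˣ →* (Module.End F K)ˣ :=
  Units.map (lmul F K).toMonoidHom

variable {F K}

@[simp]
theorem lmulUnits_apply (u : Kˣ) (x : K) : (lmulUnits F K u : Module.End F K) x = u * x := rfl

theorem lmulUnits_injective : Function.Injective (lmulUnits F K) := fun u v huv ↦
  Units.ext <| by simpa using congr(($huv : Module.End F K) 1)

theorem lmulUnits_mem_center_of_mem_range {u : Kˣ} (hu : (u : K) ∈ Set.range (algebraMap F K)) :
    lmulUnits F K u ∈ center (Module.End F K)ˣ := by
  obtain ⟨c, hc⟩ := hu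
  refine mem_center_iff.mpr fun g ↦ Units.ext <| LinearMap.ext fun x ↦ ?_
  simp [← hc, ← Algebra.smul_def]

end Algebra

namespace FiniteField

open Algebra

variable (F K : Type*) [Field F] [Field K] [Algebra F K] [Fintype F] [Fintype K]

noncomputable def frobeniusUnit : (Module.End F K)ˣ :=
  LinearMap.GeneralLinearGroup.ofLinearEquiv (frobeniusAlgEquivOfAlgebraic F K).toLinearEquiv

variable {F K}

@[simp]
theorem frobeniusUnit_apply (x : K) :
    (frobeniusUnit F K : Module.End F K) x = x ^ Fintype.card F := rfl

theorem frobeniusUnit_mul_lmulUnits (u : Kˣ) :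
    frobeniusUnit F K * lmulUnits F K u = lmulUnits F K (u ^ Fintype.card F) * frobeniusUnit F K :=
  Units.ext <| LinearMap.ext fun x ↦ by
    simp only [Units.val_mul, Module.End.mul_apply, lmulUnits_apply, frobeniusUnit_apply,
      Units.val_pow_eq_pow_val, mul_pow]

theorem frobeniusUnit_mul_self (h : Module.finrank F K = 2) :
    frobeniusUnit F K * frobeniusUnit F K = 1 :=
  Units.ext <| LinearMap.ext fun x ↦ by
    simp only [Units.val_mul, Module.End.mul_apply, frobeniusUnit_apply, Units.val_one,
      Module.End.one_apply]
    rw [← pow_mul, ← sq, ← h, ← Module.card_eq_pow_finrank, pow_card]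

theorem pow_card_add_one_eq_algebraMap_norm (h : Module.finrank F K = 2) (x : K) :
    x ^ (Fintype.card F + 1) = algebraMap F K (Algebra.norm F x) := by
  have hq := Fintype.one_lt_card (α := F)
  have hsq : Fintype.card F ^ 2 - 1 = (Fintype.card F + 1) * (Fintype.card F - 1) := by
    simpa using Nat.sq_sub_sq (Fintype.card F) 1
  rw [algebraMap_norm_eq_pow, Nat.card_eq_fintype_card, Nat.card_eq_fintype_card,
    Module.card_eq_pow_finrank (K := F) (V := K), h, hsq, Nat.mul_div_cancel _ (by omega)]

theorem lmulUnits_pow_card_add_one_mem_center (h : Module.finrank F K = 2) (u : Kˣ) :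
    lmulUnits F K (u ^ (Fintype.card F + 1)) ∈ center (Module.End F K)ˣ :=
  lmulUnits_mem_center_of_mem_range ⟨_, (pow_card_add_one_eq_algebraMap_norm h u).symm⟩

theorem pow_card_eq_self_of_lmulUnits_mem_center {u : Kˣ}
    (hu : lmulUnits F K u ∈ center (Module.End F K)ˣ) : u ^ Fintype.card F = u :=
  lmulUnits_injective <| mul_right_cancel <|
    (frobeniusUnit_mul_lmulUnits u).symm.trans (mem_center_iff.mp hu _)

theorem lmulUnits_mul_frobeniusUnit_notMem_center (h : Module.finrank F K ≠ 1) (u : Kˣ) :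
    lmulUnits F K u * frobeniusUnit F K ∉ center (Module.End F K)ˣ := by
  intro hu
  have hfix (x : Kˣ) : x ^ Fintype.card F = x := by
    have := mem_center_iff.mp hu (lmulUnits F K x)
    rw [mul_assoc, frobeniusUnit_mul_lmulUnits, ← mul_assoc, ← mul_assoc, ← map_mul,
      ← map_mul, mul_comm] at this
    exact (mul_left_cancel (lmulUnits_injective (mul_right_cancel this))).symm
  have hfrob : frobeniusAlgEquivOfAlgebraic F K = 1 := AlgEquiv.ext fun x ↦ by
    rcases eq_or_ne x 0 with rfl | hx
    · simp
    · simpa using congr(($(hfix (Units.mk0 x hx)) : K))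
  exact h (by rw [← orderOf_frobeniusAlgEquivOfAlgebraic, hfrob, orderOf_one])

theorem orderOf_mk_lmulUnits_of_forall_mem_zpowers (h : Module.finrank F K = 2) {ζ : Kˣ}
    (hζ : ∀ x, x ∈ zpowers ζ) :
    orderOf (QuotientGroup.mk' (center (Module.End F K)ˣ) (lmulUnits F K ζ)) =
      Fintype.card F + 1 := by
  set q := Fintype.card F
  have hq := Fintype.one_lt_card (α := F)
  have hζ_order : orderOf ζ = (q + 1) * (q - 1) := by
    rw [orderOf_eq_card_of_forall_mem_zpowers hζ, Nat.card_units, Nat.card_eq_fintype_card,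
      Module.card_eq_pow_finrank (K := F) (V := K), h]
    simpa using Nat.sq_sub_sq q 1
  have hdvd (k : ℕ)
      (hk : QuotientGroup.mk' (center (Module.End F K)ˣ) (lmulUnits F K ζ) ^ k = 1) :
      q + 1 ∣ k := by
    rw [← map_pow, ← map_pow, QuotientGroup.mk'_apply, QuotientGroup.eq_one_iff] at hk
    have hpow : (ζ ^ k) ^ (q - 1) = 1 := by
      have := pow_card_eq_self_of_lmulUnits_mem_center hk
      rwa [← Nat.sub_add_cancel hq.le, pow_succ, mul_eq_right] at this
    rw [← pow_mul, ← orderOf_dvd_iff_pow_eq_one, hζ_order] at hpow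
    exact Nat.dvd_of_mul_dvd_mul_right (by omega) hpow
  refine Nat.dvd_antisymm (orderOf_dvd_of_pow_eq_one ?_) (hdvd _ (pow_orderOf_eq_one _))
  rw [← map_pow, ← map_pow, QuotientGroup.mk'_apply, QuotientGroup.eq_one_iff]
  exact lmulUnits_pow_card_add_one_mem_center h ζ

theorem exists_subgroup_units_end_quotient_center_mulEquiv_dihedralGroup
    (h : Module.finrank F K = 2) :
    ∃ H : Subgroup ((Module.End F K)ˣ ⧸ center (Module.End F K)ˣ),
      Nonempty (H ≃* DihedralGroup (Fintype.card F + 1)) := by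
  obtain ⟨ζ, hζ⟩ := IsCyclic.exists_generator (α := Kˣ)
  set π := QuotientGroup.mk' (center (Module.End F K)ˣ)
  have hr := orderOf_mk_lmulUnits_of_forall_mem_zpowers h hζ
  refine exists_subgroup_mulEquiv_dihedralGroup hr (s := π (frobeniusUnit F K)) ?_ ?_ ?_
  · rw [← map_mul, frobeniusUnit_mul_self h, map_one]
  · rw [← map_mul, ← map_mul, frobeniusUnit_mul_lmulUnits, mul_assoc, frobeniusUnit_mul_self h,
      mul_one, map_pow, map_pow, eq_inv_iff_mul_eq_one, ← pow_succ, ← hr, pow_orderOf_eq_one]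
  · rintro ⟨k, (hk : _ ^ k = _)⟩
    rw [← map_zpow, ← map_zpow, QuotientGroup.mk'_apply, QuotientGroup.mk'_apply,
      QuotientGroup.eq, ← map_inv] at hk
    exact lmulUnits_mul_frobeniusUnit_notMem_center (by omega) _ hk

end FiniteField

theorem stmt16_general (q : ℕ) (F : Type*) [Field F] [Fintype F] (hF : Fintype.card F = q) :
    ∃ H : Subgroup (Matrix.GeneralLinearGroup (Fin 2) F ⧸
        Subgroup.center (Matrix.GeneralLinearGroup (Fin 2) F)),
      Nonempty (↥H ≃* DihedralGroup (q + 1)) := by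
  subst hF
  obtain ⟨K, _, _, _, hK⟩ := FiniteField.exists_finrank_eq F two_ne_zero
  have := Fintype.ofFinite K
  obtain ⟨H, ⟨iso⟩⟩ :=
    FiniteField.exists_subgroup_units_end_quotient_center_mulEquiv_dihedralGroup hK
  let toGL : (Module.End F K)ˣ ≃* Matrix.GeneralLinearGroup (Fin 2) F :=
    Units.mapEquiv (algEquivMatrix (Module.finBasisOfFinrankEq F K hK)).toMulEquiv
  let toPGL := QuotientGroup.congr _ _ toGL toGL.map_center
  exact ⟨H.map toPGL.toMonoidHom, ⟨(toPGL.subgroupMap H).symm.trans iso⟩⟩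

theorem stmt16 (p e q : ℕ) (hp : p.Prime) (hodd : Odd q) (he : 0 < e) (hq : q = p ^ e)
    (F : Type*) [Field F] [Fintype F] (hF : Fintype.card F = q) :
    ∃ H : Subgroup (Matrix.GeneralLinearGroup (Fin 2) F ⧸
        Subgroup.center (Matrix.GeneralLinearGroup (Fin 2) F)),
      Nonempty (↥H ≃* DihedralGroup (q + 1)) :=
  stmt16_general q F hF
end
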